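/- arXiv:1902.01229 — 8 statements merged into one kernel-verified Lean document; each statement's English description precedes it below -/
import Mathlib

section
/- Let K be the quotient topological space of the torus S¹ × S¹ by the equivalence relation identifying (x, y) with (-x, conj(y)) (the Klein bottle). The quotient map p : S¹ × S¹ → K is a covering map, and every fiber of p has exactly two elements. -/
noncomputable section

open Complex ComplexConjugate

/-- Negation on the unit circle `S¹ = {w : ℂ | ‖w‖ = 1}`. -/
def Circle.negC (x : Circle) : Circle :=
  ⟨-(x : ℂ), mem_sphere_zero_iff_norm.2 (by simp [Circle.norm_coe])⟩

/-- Complex conjugation on the unit circle. -/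
def Circle.conjC (x : Circle) : Circle :=
  ⟨conj (x : ℂ), mem_sphere_zero_iff_norm.2 (by simp [Circle.norm_coe])⟩

/-- The torus `S¹ × S¹` (with the product topology). -/
abbrev Torus : Type := Circle × Circle

/-- The map `τ(x, y) = (-x, conj y)` on the torus. -/
def tauMap : Torus → Torus := fun v => (v.1.negC, v.2.conjC)

lemma tauMap_tauMap (v : Torus) : tauMap (tauMap v) = v := by
  obtain ⟨x, y⟩ := v
  refine Prod.ext ?_ ?_
  · exact Circle.ext (by simp [tauMap, Circle.negC])
  · exact Circle.ext (by simp [tauMap, Circle.conjC])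

/-- The equivalence relation on the torus identifying `(x,y)` with `(-x, conj y)`. -/
def torusSetoid : Setoid Torus where
  r v w := w = v ∨ w = tauMap v
  iseqv := by
    constructor
    · exact fun v => Or.inl rfl
    · rintro v w (rfl | rfl)
      · exact Or.inl rfl
      · exact Or.inr (tauMap_tauMap v).symm
    · rintro v w u (rfl | rfl) (rfl | rfl)
      · exact Or.inl rfl
      · exact Or.inr rfl
      · exact Or.inr rfl
      · exact Or.inl (tauMap_tauMap v)

/-- The Klein bottle `K = (S¹ × S¹) / ((x,y) ∼ (-x, conj y))`, with the quotient topology. -/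
def KleinBottle : Type := Quotient torusSetoid

instance : TopologicalSpace KleinBottle := instTopologicalSpaceQuotient

/-- The quotient map `p : S¹ × S¹ → K`. -/
def pK : Torus → KleinBottle := Quotient.mk torusSetoid

namespace KleinAux

open Set

lemma continuous_tauMap : Continuous tauMap := by
  refine Continuous.prodMk ?_ ?_
  · exact Continuous.subtype_mk ((continuous_subtype_val.comp continuous_fst).neg) _
  · exact Continuous.subtype_mk
      (Complex.continuous_conj.comp (continuous_subtype_val.comp continuous_snd)) _

lemma continuous_pK : Continuous pK := continuous_quot_mk

lemma pK_tauMap (v : Torus) : pK (tauMap v) = pK v :=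
  (Quotient.sound (Or.inr rfl)).symm

lemma pK_eq_iff {v w : Torus} : pK v = pK w ↔ v = w ∨ v = tauMap w := by
  constructor
  · intro h
    rcases Quotient.exact h with h | h
    · exact Or.inl h.symm
    · right
      subst h
      exact (tauMap_tauMap v).symm
  · rintro (rfl | rfl)
    · rfl
    · exact pK_tauMap w

lemma preimage_image_pK (S : Set Torus) : pK ⁻¹' (pK '' S) = S ∪ tauMap ⁻¹' S := by
  ext v
  simp only [mem_preimage, mem_image, mem_union]
  constructor
  · rintro ⟨w, hw, hwv⟩
    rcases pK_eq_iff.1 hwv.symm with rfl | rfl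
    · exact Or.inl hw
    · right
      simpa [tauMap_tauMap] using hw
  · rintro (hv | hv)
    · exact ⟨v, hv, rfl⟩
    · exact ⟨tauMap v, hv, pK_tauMap v⟩

lemma isOpenMap_pK : IsOpenMap pK := by
  intro S hS
  show IsOpen (pK ⁻¹' (pK '' S))
  rw [preimage_image_pK]
  exact hS.union (hS.preimage continuous_tauMap)

lemma norm_circle (x : Circle) : ‖(x : ℂ)‖ = 1 := mem_sphere_zero_iff_norm.1 x.2

/-- Half-disc neighborhood of `a` on the circle. -/
def V (a : Circle) : Set Circle := {x | ‖(x : ℂ) - (a : ℂ)‖ < 1}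

lemma isOpen_V (a : Circle) : IsOpen (V a) := by
  have : Continuous fun x : Circle => ‖(x : ℂ) - (a : ℂ)‖ :=
    (continuous_subtype_val.sub continuous_const).norm
  exact isOpen_lt this continuous_const

lemma mem_V_self (a : Circle) : a ∈ V a := by simp [V]

lemma negC_not_mem_V {a x : Circle} (hx : x ∈ V a) : x.negC ∉ V a := by
  intro h
  have h1 : ‖(a : ℂ) + a‖ ≤ ‖(a : ℂ) - x‖ + ‖(x : ℂ) + a‖ := by
    calc ‖(a : ℂ) + a‖ = ‖((a : ℂ) - x) + ((x : ℂ) + a)‖ := by ring_nf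
      _ ≤ _ := norm_add_le _ _
  have h2 : ‖(a : ℂ) + a‖ = 2 := by
    have := norm_circle a
    calc ‖(a : ℂ) + a‖ = ‖(2 : ℂ) * a‖ := by ring_nf
      _ = 2 := by rw [norm_mul, this]; simp
  have h3 : ‖(a : ℂ) - x‖ < 1 := by rwa [norm_sub_rev]
  have h4 : ‖(x : ℂ) + a‖ < 1 := by
    have : ((x.negC : ℂ)) - a = -((x : ℂ) + a) := by simp [Circle.negC]; ring
    have := h
    simp only [V, mem_setOf_eq] at this
    rw [show ((x.negC : ℂ)) - a = -((x : ℂ) + a) by simp [Circle.negC]; ring, norm_neg] at this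
    exact this
  linarith

/-- The basic open set in the torus over `V a`. -/
def W (a : Circle) : Set Torus := {v | v.1 ∈ V a}

lemma isOpen_W (a : Circle) : IsOpen (W a) := (isOpen_V a).preimage continuous_fst

lemma tauMap_not_mem_W {a : Circle} {v : Torus} (hv : v ∈ W a) : tauMap v ∉ W a :=
  fun h => negC_not_mem_V hv h

lemma injOn_pK (a : Circle) : InjOn pK (W a) := by
  intro v hv w hw h
  rcases pK_eq_iff.1 h with rfl | rfl
  · rfl
  · exact absurd hv (tauMap_not_mem_W hw)

/-- The evenly covered neighborhood. -/
def U (a : Circle) : Set KleinBottle := pK '' (W a)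

lemma isOpen_U (a : Circle) : IsOpen (U a) := isOpenMap_pK _ (isOpen_W a)

/-- The partial homeomorphism from `W a` onto `U a` induced by `pK`. -/
def h0 (a : Circle) : PartialHomeomorph Torus KleinBottle :=
  PartialHomeomorph.ofContinuousOpen ((injOn_pK a).toPartialEquiv pK (W a))
    continuous_pK.continuousOn isOpenMap_pK (isOpen_W a)

lemma h0_source (a : Circle) : (h0 a).source = W a := rfl
lemma h0_target (a : Circle) : (h0 a).target = U a := rfl
lemma h0_apply (a : Circle) (v : Torus) : h0 a v = pK v := rfl

/-- A continuous section of `pK` over `U a`. -/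
def sigmaFun (a : Circle) : KleinBottle → Torus := (h0 a).symm

lemma sigma_mem_W {a : Circle} {k : KleinBottle} (hk : k ∈ U a) : sigmaFun a k ∈ W a :=
  (h0 a).map_target hk

lemma pK_sigma {a : Circle} {k : KleinBottle} (hk : k ∈ U a) : pK (sigmaFun a k) = k :=
  (h0 a).right_inv hk

lemma sigma_pK {a : Circle} {v : Torus} (hv : v ∈ W a) : sigmaFun a (pK v) = v :=
  (h0 a).left_inv hv

lemma continuousOn_sigma (a : Circle) : ContinuousOn (sigmaFun a) (U a) :=
  (h0 a).continuousOn_symm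


open scoped Classical in
/-- The Bool-indicator: which sheet a point lies on. -/
def chi (a : Circle) (v : Torus) : Bool := if v.1 ∈ V a then false else true

lemma chi_eq_false {a : Circle} {v : Torus} (hv : v.1 ∈ V a) : chi a v = false := by
  simp [chi, hv]

lemma chi_eq_true {a : Circle} {v : Torus} (hv : v.1 ∉ V a) : chi a v = true := by
  simp [chi, hv]

lemma not_mem_V_of_tau {a : Circle} {v : Torus} (hv : tauMap v ∈ W a) : v.1 ∉ V a := by
  intro h
  exact negC_not_mem_V h hv

lemma preimage_U (a : Circle) : pK ⁻¹' (U a) = W a ∪ tauMap ⁻¹' (W a) :=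
  preimage_image_pK (W a)

/-- The two-sheeted trivialization of `pK` over `U a`. -/
def triv (a : Circle) : Bundle.Trivialization Bool pK where
  toFun v := (pK v, chi a v)
  invFun p := cond p.2 (tauMap (sigmaFun a p.1)) (sigmaFun a p.1)
  source := pK ⁻¹' (U a)
  target := (U a) ×ˢ (Set.univ : Set Bool)
  map_source' := fun v hv => ⟨hv, trivial⟩
  map_target' := by
    rintro ⟨k, b⟩ ⟨hk, -⟩
    cases b with
    | false =>
      show pK (sigmaFun a k) ∈ U a
      rw [pK_sigma hk]; exact hk
    | true =>
      show pK (tauMap (sigmaFun a k)) ∈ U a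
      rw [pK_tauMap, pK_sigma hk]; exact hk
  left_inv' := by
    intro v hv
    rw [Set.mem_preimage, ← Set.mem_preimage, preimage_U] at hv
    by_cases h1 : v.1 ∈ V a
    · show cond (chi a v) _ _ = v
      rw [chi_eq_false h1]
      exact sigma_pK h1
    · have hv2 : tauMap v ∈ W a := hv.resolve_left h1
      show cond (chi a v) _ _ = v
      rw [chi_eq_true h1]
      show tauMap (sigmaFun a (pK v)) = v
      rw [← pK_tauMap v, sigma_pK hv2, tauMap_tauMap]
  right_inv' := by
    rintro ⟨k, b⟩ ⟨hk, -⟩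
    cases b with
    | false =>
      show (pK (sigmaFun a k), chi a (sigmaFun a k)) = (k, false)
      rw [pK_sigma hk, chi_eq_false (sigma_mem_W hk)]
    | true =>
      show (pK (tauMap (sigmaFun a k)), chi a (tauMap (sigmaFun a k))) = (k, true)
      rw [pK_tauMap, pK_sigma hk,
        chi_eq_true (show (tauMap (sigmaFun a k)).1 ∉ V a from
          negC_not_mem_V (sigma_mem_W hk))]
  open_source := (isOpen_U a).preimage continuous_pK
  open_target := (isOpen_U a).prod isOpen_univ
  continuousOn_toFun := by
    refine ContinuousOn.prodMk continuous_pK.continuousOn ?_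
    intro v hv
    apply ContinuousAt.continuousWithinAt
    rw [Set.mem_preimage, ← Set.mem_preimage, preimage_U] at hv
    by_cases h1 : v.1 ∈ V a
    · have hev : (chi a) =ᶠ[nhds v] fun _ => false :=
        Filter.eventually_of_mem ((isOpen_W a).mem_nhds h1) fun w hw => chi_eq_false hw
      exact (continuousAt_congr hev).2 continuousAt_const
    · have hv2 : v ∈ tauMap ⁻¹' (W a) := hv.resolve_left h1
      have hop : IsOpen (tauMap ⁻¹' (W a)) := (isOpen_W a).preimage continuous_tauMap
      have hev : (chi a) =ᶠ[nhds v] fun _ => true :=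
        Filter.eventually_of_mem (hop.mem_nhds hv2) fun w hw =>
          chi_eq_true (not_mem_V_of_tau hw)
      exact (continuousAt_congr hev).2 continuousAt_const
  continuousOn_invFun := by
    rintro ⟨k, b⟩ ⟨hk, -⟩
    have hσ : ContinuousWithinAt (fun q : KleinBottle × Bool => sigmaFun a q.1)
        ((U a) ×ˢ (Set.univ : Set Bool)) (k, b) :=
      (continuousOn_sigma a k hk).comp continuous_fst.continuousWithinAt fun q hq => hq.1
    have hmem : {q : KleinBottle × Bool | q.2 = b} ∈ nhds (k, b) :=
      (isOpen_discrete ({b} : Set Bool)).preimage continuous_snd |>.mem_nhds rfl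
    cases b with
    | false =>
      refine hσ.congr_of_eventuallyEq ?_ rfl
      exact Filter.eventually_of_mem (mem_nhdsWithin_of_mem_nhds hmem)
        fun q hq => by
          obtain ⟨q1, q2⟩ := q
          simp only [Set.mem_setOf_eq] at hq
          subst hq
          rfl
    | true =>
      have : ContinuousWithinAt (fun q : KleinBottle × Bool => tauMap (sigmaFun a q.1))
          ((U a) ×ˢ (Set.univ : Set Bool)) (k, true) :=
        continuous_tauMap.continuousAt.comp_continuousWithinAt hσ
      refine this.congr_of_eventuallyEq ?_ rfl
      exact Filter.eventually_of_mem (mem_nhdsWithin_of_mem_nhds hmem)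
        fun q hq => by
          obtain ⟨q1, q2⟩ := q
          simp only [Set.mem_setOf_eq] at hq
          subst hq
          rfl
  baseSet := U a
  open_baseSet := isOpen_U a
  source_eq := rfl
  target_eq := rfl
  proj_toFun := fun v _ => rfl

end KleinAux

/-- The quotient map `p : S¹ × S¹ → K` onto the Klein bottle is a (two-sheeted)
covering map: every fiber has exactly two elements. -/
theorem pK_isCoveringMap_and_fibers_two :
    IsCoveringMap pK ∧ ∀ k : KleinBottle, Nat.card {v : Torus // pK v = k} = 2 := by
  constructor
  · intro k
    induction k using Quotient.inductionOn with
    | h v =>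
      have hk : pK v ∈ KleinAux.U v.1 := ⟨v, KleinAux.mem_V_self v.1, rfl⟩
      exact IsEvenlyCovered.to_isEvenlyCovered_preimage
        (IsEvenlyCovered.of_trivialization (t := KleinAux.triv v.1) hk)
  · intro k
    induction k using Quotient.inductionOn with
    | h w =>
      rw [Nat.card_eq_two_iff]
      have hne : tauMap w ≠ w := by
        intro h
        have hc : ((w.1 : Circle) : ℂ) = -((w.1 : Circle) : ℂ) :=
          (congrArg (fun v : Torus => ((v.1 : Circle) : ℂ)) h).symm
        have hz : ((w.1 : Circle) : ℂ) = 0 := by linear_combination hc / 2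
        have := KleinAux.norm_circle w.1
        rw [hz] at this
        simp at this
      refine ⟨⟨w, rfl⟩, ⟨tauMap w, KleinAux.pK_tauMap w⟩, ?_, ?_⟩
      · intro h
        exact hne (congrArg Subtype.val h).symm
      · ext ⟨v, hv⟩
        simp only [Set.mem_insert_iff, Set.mem_singleton_iff, Set.mem_univ, iff_true]
        rcases KleinAux.pK_eq_iff.1 hv with rfl | rfl
        · exact Or.inl rfl
        · exact Or.inr rfl
end
end

section
/- Let K = (S¹ × S¹) / ((x,y) ∼ (-x, conj(y))) be the Klein bottle, with base point k₀ the class of (1,1). The fundamental group π₁(K, k₀) is isomorphic to the presented group G on two generators μ and λ subject to the single relation μλμ = λ (equivalently, the quotient of the free group on {μ, λ} by the normal closure of μλμλ⁻¹). -/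
noncomputable section

open Complex ComplexConjugate

/-- The two generators `μ` and `λ` of the Klein bottle group. -/
inductive KleinGen : Type
  | mu : KleinGen
  | lam : KleinGen

/-- The single relator `μλμλ⁻¹` of the Klein bottle group. -/
def kleinRels : Set (FreeGroup KleinGen) :=
  {FreeGroup.of KleinGen.mu * FreeGroup.of KleinGen.lam * FreeGroup.of KleinGen.mu *
    (FreeGroup.of KleinGen.lam)⁻¹}

/-- The presented group `G = ⟨μ, λ | μλμ = λ⟩`. -/
abbrev KleinGroup : Type := PresentedGroup kleinRels

/-- The base point of the Klein bottle: the class of `(1,1)`. -/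
def kleinBase : KleinBottle := pK (1, 1)


namespace KBproof

/-- The concrete Klein bottle group. -/
@[ext] structure KC where
  m : ℤ
  k : ℤ

namespace KC

instance : One KC := ⟨⟨0, 0⟩⟩
instance : Mul KC := ⟨fun a b => ⟨a.m + b.m, a.k + (a.m.negOnePow : ℤ) * b.k⟩⟩
instance : Inv KC := ⟨fun a => ⟨-a.m, -((a.m.negOnePow : ℤ) * a.k)⟩⟩

lemma mul_def (a b : KC) : a * b = ⟨a.m + b.m, a.k + (a.m.negOnePow : ℤ) * b.k⟩ := rfl
lemma one_def : (1 : KC) = ⟨0, 0⟩ := rfl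
lemma inv_def (a : KC) : a⁻¹ = ⟨-a.m, -((a.m.negOnePow : ℤ) * a.k)⟩ := rfl

@[simp] lemma mul_m (a b : KC) : (a * b).m = a.m + b.m := rfl
@[simp] lemma mul_k (a b : KC) : (a * b).k = a.k + (a.m.negOnePow : ℤ) * b.k := rfl
@[simp] lemma one_m : (1 : KC).m = 0 := rfl
@[simp] lemma one_k : (1 : KC).k = 0 := rfl
@[simp] lemma inv_m (a : KC) : a⁻¹.m = -a.m := rfl
@[simp] lemma inv_k (a : KC) : a⁻¹.k = -((a.m.negOnePow : ℤ) * a.k) := rfl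

instance : Group KC where
  mul_assoc a b c := by
    ext
    · simp [add_assoc]
    · simp [Int.negOnePow_add, Units.val_mul]
      ring
  one_mul a := by ext <;> simp
  mul_one a := by ext <;> simp
  inv_mul_cancel a := by
    ext
    · simp
    · simp [Int.negOnePow_neg]

lemma mu_pow (k : ℤ) : (⟨0, 1⟩ : KC) ^ k = ⟨0, k⟩ := by
  induction k using Int.induction_on with
  | zero => rfl
  | succ n ih => rw [zpow_add_one, ih]; ext <;> simp
  | pred n ih => rw [zpow_sub_one, ih]; ext <;> simp [sub_eq_add_neg]

lemma lam_pow (m : ℤ) : (⟨1, 0⟩ : KC) ^ m = ⟨m, 0⟩ := by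
  induction m using Int.induction_on with
  | zero => rfl
  | succ n ih => rw [zpow_add_one, ih]; ext <;> simp
  | pred n ih => rw [zpow_sub_one, ih]; ext <;> simp [sub_eq_add_neg]

end KC

/-! ### The presented group is isomorphic to `KC`. -/

private def genMap : KleinGen → KC
  | KleinGen.mu => ⟨0, 1⟩
  | KleinGen.lam => ⟨1, 0⟩

lemma relsMap : ∀ r ∈ kleinRels, FreeGroup.lift genMap r = 1 := by
  intro r hr
  rw [kleinRels, Set.mem_singleton_iff] at hr
  subst hr
  simp only [map_mul, map_inv, FreeGroup.lift_apply_of, genMap]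
  rw [mul_inv_eq_one]
  ext <;> simp

/-- The homomorphism from the presented group to the concrete group. -/
def presToKC : KleinGroup →* KC := PresentedGroup.toGroup relsMap

@[simp] lemma presToKC_mu : presToKC (PresentedGroup.of KleinGen.mu) = ⟨0, 1⟩ :=
  PresentedGroup.toGroup.of relsMap

@[simp] lemma presToKC_lam : presToKC (PresentedGroup.of KleinGen.lam) = ⟨1, 0⟩ :=
  PresentedGroup.toGroup.of relsMap

local notation "μ" => (PresentedGroup.of (rels := kleinRels) KleinGen.mu)
local notation "Λ" => (PresentedGroup.of (rels := kleinRels) KleinGen.lam)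

lemma pres_rel : μ * Λ * μ = Λ := by
  have : (PresentedGroup.mk kleinRels) (FreeGroup.of KleinGen.mu * FreeGroup.of KleinGen.lam *
      FreeGroup.of KleinGen.mu * (FreeGroup.of KleinGen.lam)⁻¹) = 1 := by
    apply (QuotientGroup.eq_one_iff _).2
    exact Subgroup.subset_normalClosure (by simp [kleinRels])
  simpa only [map_mul, map_inv, mul_inv_eq_one, PresentedGroup.of] using this

lemma pres_conj_pow (k : ℤ) : Λ⁻¹ * μ ^ k * Λ = μ ^ (-k) := by
  have h : μ * Λ = Λ * μ⁻¹ := by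
    calc μ * Λ = (μ * Λ * μ) * μ⁻¹ := by group
    _ = Λ * μ⁻¹ := by rw [pres_rel]
  have hconj : Λ⁻¹ * μ * Λ = μ⁻¹ := by
    calc Λ⁻¹ * μ * Λ = Λ⁻¹ * (μ * Λ) := by group
    _ = Λ⁻¹ * (Λ * μ⁻¹) := by rw [h]
    _ = μ⁻¹ := by group
  have hz : (Λ⁻¹ * μ * Λ) ^ k = Λ⁻¹ * μ ^ k * Λ := by
    have := conj_zpow (i := k) (a := Λ⁻¹) (b := μ)
    simpa [inv_inv] using this
  rw [← hz, hconj, inv_zpow, zpow_neg]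

lemma pres_mu_lam (k : ℤ) : μ ^ k * Λ = Λ * μ ^ (-k) := by
  calc μ ^ k * Λ = Λ * (Λ⁻¹ * μ ^ k * Λ) := by group
  _ = Λ * μ ^ (-k) := by rw [pres_conj_pow]

lemma pres_mu_lam_inv (k : ℤ) : Λ⁻¹ * μ ^ k = μ ^ (-k) * Λ⁻¹ := by
  calc Λ⁻¹ * μ ^ k = (Λ⁻¹ * μ ^ k * Λ) * Λ⁻¹ := by group
  _ = μ ^ (-k) * Λ⁻¹ := by rw [pres_conj_pow]

lemma pres_lam_mu (k : ℤ) : Λ * μ ^ k = μ ^ (-k) * Λ := by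
  rw [pres_mu_lam (-k), neg_neg]

lemma pres_lam_zpow_mu (m : ℤ) : ∀ k : ℤ,
    Λ ^ m * μ ^ k = μ ^ ((m.negOnePow : ℤ) * k) * Λ ^ m := by
  induction m using Int.induction_on with
  | zero => intro k; simp
  | succ n ih =>
      intro k
      have hexp : (((n:ℤ)+1).negOnePow : ℤ) * k = ((n:ℤ).negOnePow : ℤ) * (-k) := by
        rw [Int.negOnePow_succ]; push_cast; ring
      calc Λ ^ ((n:ℤ) + 1) * μ ^ k = Λ ^ (n:ℤ) * (Λ * μ ^ k) := by
            rw [zpow_add_one]; group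
      _ = Λ ^ (n:ℤ) * (μ ^ (-k) * Λ) := by rw [pres_lam_mu]
      _ = (Λ ^ (n:ℤ) * μ ^ (-k)) * Λ := by group
      _ = (μ ^ (((n:ℤ).negOnePow : ℤ) * (-k)) * Λ ^ (n:ℤ)) * Λ := by rw [ih]
      _ = μ ^ ((((n:ℤ)+1).negOnePow : ℤ) * k) * Λ ^ ((n:ℤ)+1) := by
            rw [hexp, zpow_add_one]; group
  | pred n ih =>
      intro k
      have hneg : (-(n:ℤ)-1).negOnePow = -(-(n:ℤ)).negOnePow := by
        have h := Int.negOnePow_succ (-(n:ℤ)-1)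
        rw [show (-(n:ℤ)-1+1) = -(n:ℤ) by ring] at h
        rw [h]; simp
      have hexp : ((-(n:ℤ)-1).negOnePow : ℤ) * k = ((-(n:ℤ)).negOnePow : ℤ) * (-k) := by
        rw [hneg]; push_cast; ring
      calc Λ ^ (-(n:ℤ) - 1) * μ ^ k = Λ ^ (-(n:ℤ)) * (Λ⁻¹ * μ ^ k) := by
            rw [zpow_sub_one]; group
      _ = Λ ^ (-(n:ℤ)) * (μ ^ (-k) * Λ⁻¹) := by rw [pres_mu_lam_inv]
      _ = (Λ ^ (-(n:ℤ)) * μ ^ (-k)) * Λ⁻¹ := by group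
      _ = (μ ^ (((-(n:ℤ)).negOnePow : ℤ) * (-k)) * Λ ^ (-(n:ℤ))) * Λ⁻¹ := by rw [ih]
      _ = μ ^ (((-(n:ℤ)-1).negOnePow : ℤ) * k) * Λ ^ (-(n:ℤ)-1) := by
            rw [hexp, zpow_sub_one]; group

/-- The inverse homomorphism. -/
def kcToPres : KC →* KleinGroup where
  toFun a := μ ^ a.k * Λ ^ a.m
  map_one' := by simp
  map_mul' a b := by
    simp only [KC.mul_m, KC.mul_k]
    calc μ ^ (a.k + (a.m.negOnePow : ℤ) * b.k) * Λ ^ (a.m + b.m)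
        = μ ^ a.k * (μ ^ ((a.m.negOnePow : ℤ) * b.k) * Λ ^ a.m) * Λ ^ b.m := by
          rw [zpow_add, zpow_add]; group
      _ = μ ^ a.k * (Λ ^ a.m * μ ^ b.k) * Λ ^ b.m := by rw [← pres_lam_zpow_mu]
      _ = (μ ^ a.k * Λ ^ a.m) * (μ ^ b.k * Λ ^ b.m) := by group

lemma presToKC_kcToPres (a : KC) : presToKC (kcToPres a) = a := by
  show presToKC (μ ^ a.k * Λ ^ a.m) = a
  rw [map_mul, map_zpow, map_zpow, presToKC_mu, presToKC_lam, KC.mu_pow, KC.lam_pow]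
  ext <;> simp

lemma kcToPres_presToKC (x : KleinGroup) : kcToPres (presToKC x) = x := by
  have : kcToPres.comp presToKC = MonoidHom.id KleinGroup := by
    apply PresentedGroup.ext
    intro y
    cases y with
    | mu =>
        show kcToPres (presToKC (PresentedGroup.of KleinGen.mu)) = _
        rw [presToKC_mu]
        show μ ^ (1:ℤ) * Λ ^ (0:ℤ) = _
        simp
    | lam =>
        show kcToPres (presToKC (PresentedGroup.of KleinGen.lam)) = _
        rw [presToKC_lam]
        show μ ^ (0:ℤ) * Λ ^ (1:ℤ) = _
        simp
  exact DFunLike.congr_fun this x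

/-- The isomorphism between the presented Klein group and the concrete one. -/
def presEquivKC : KleinGroup ≃* KC where
  toFun := presToKC
  invFun := kcToPres
  left_inv := kcToPres_presToKC
  right_inv := presToKC_kcToPres
  map_mul' := map_mul _

end KBproof

namespace KBproof

open Real

/-- The sign `(-1)^m` as a real number. -/
def sg (m : ℤ) : ℝ := ((m.negOnePow : ℤ) : ℝ)

@[simp] lemma sg_zero : sg 0 = 1 := by simp [sg]
lemma sg_even {m : ℤ} (h : Even m) : sg m = 1 := by simp [sg, Int.negOnePow_even m h]
lemma sg_odd {m : ℤ} (h : Odd m) : sg m = -1 := by simp [sg, Int.negOnePow_odd m h]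
lemma sg_add (m n : ℤ) : sg (m + n) = sg m * sg n := by
  simp [sg, Int.negOnePow_add, Units.val_mul]
lemma sg_mul_self (m : ℤ) : sg m * sg m = 1 := by
  rcases Int.even_or_odd m with h | h
  · rw [sg_even h]; norm_num
  · rw [sg_odd h]; norm_num
lemma sg_neg (m : ℤ) : sg (-m) = sg m := by simp [sg, Int.negOnePow_neg]

/-- The action of the concrete Klein group on `ℝ × ℝ`. -/
def act (g : KC) (p : ℝ × ℝ) : ℝ × ℝ := (p.1 + g.m, sg g.m * p.2 + g.k)

lemma act_one (p : ℝ × ℝ) : act 1 p = p := by simp [act]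

lemma act_act (g h : KC) (p : ℝ × ℝ) : act g (act h p) = act (g * h) p := by
  simp only [act, KC.mul_m, KC.mul_k]
  refine Prod.ext ?_ ?_
  · push_cast; ring
  · show sg g.m * (sg h.m * p.2 + ↑h.k) + ↑g.k = sg (g.m + h.m) * p.2 + ↑(g.k + (g.m.negOnePow : ℤ) * h.k)
    rw [sg_add]
    push_cast [sg]
    ring

lemma act_inv_act (g : KC) (p : ℝ × ℝ) : act g⁻¹ (act g p) = p := by
  rw [act_act, inv_mul_cancel, act_one]

lemma act_act_inv (g : KC) (p : ℝ × ℝ) : act g (act g⁻¹ p) = p := by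
  rw [act_act, mul_inv_cancel, act_one]

lemma continuous_act (g : KC) : Continuous (act g) := by
  unfold act; fun_prop

lemma act_fixed {g : KC} {p : ℝ × ℝ} (h : act g p = p) : g = 1 := by
  have h1 : p.1 + (g.m : ℝ) = p.1 := congrArg Prod.fst h
  have hm : g.m = 0 := by
    have : (g.m : ℝ) = 0 := by linarith
    exact_mod_cast this
  have h2 : sg g.m * p.2 + (g.k : ℝ) = p.2 := congrArg Prod.snd h
  rw [hm, sg_zero, one_mul] at h2
  have hk : g.k = 0 := by
    have : (g.k : ℝ) = 0 := by linarith
    exact_mod_cast this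
  ext <;> simp [hm, hk]

/-- The covering projection `ℝ × ℝ → K`. -/
def cmap (p : ℝ × ℝ) : Torus :=
  (Circle.exp (Real.pi * p.1), Circle.exp (2 * Real.pi * p.2))

def qmap (p : ℝ × ℝ) : KleinBottle := pK (cmap p)

lemma continuous_cmap : Continuous cmap := by
  apply Continuous.prodMk
  · exact Circle.exp.continuous.comp (continuous_const.mul continuous_fst)
  · exact Circle.exp.continuous.comp (continuous_const.mul continuous_snd)

lemma continuous_pK : Continuous pK := continuous_quotient_mk'

lemma continuous_qmap : Continuous qmap := continuous_pK.comp continuous_cmap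

lemma negC_eq (z : Circle) : z.negC = Circle.exp Real.pi * z := by
  apply Circle.ext
  show -(z : ℂ) = (Circle.exp Real.pi : ℂ) * z
  rw [Circle.coe_exp]
  push_cast
  rw [Complex.exp_pi_mul_I]
  ring

lemma conjC_eq (z : Circle) : z.conjC = z⁻¹ := by
  apply Circle.ext
  exact (Circle.coe_inv_eq_conj z).symm

lemma conjC_exp (a : ℝ) : (Circle.exp a).conjC = Circle.exp (-a) := by
  rw [conjC_eq, Circle.exp_neg]

lemma tauMap_cmap (p : ℝ × ℝ) : tauMap (cmap p) = cmap (p.1 + 1, -p.2) := by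
  refine Prod.ext ?_ ?_
  · show (cmap p).1.negC = Circle.exp (Real.pi * (p.1 + 1))
    rw [negC_eq]
    show Circle.exp Real.pi * Circle.exp (Real.pi * p.1) = _
    rw [← Circle.exp_add]
    congr 1; ring
  · show (Circle.exp (2 * Real.pi * p.2)).conjC = Circle.exp (2 * Real.pi * (-p.2))
    rw [conjC_exp]
    congr 1; ring

lemma pK_eq_iff (v w : Torus) : pK v = pK w ↔ (w = v ∨ w = tauMap v) :=
  ⟨fun h => Quotient.exact h, fun h => Quotient.sound h⟩

lemma qmap_act (g : KC) (p : ℝ × ℝ) : qmap (act g p) = qmap p := by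
  rcases Int.even_or_odd g.m with he | ho
  · obtain ⟨a, ha⟩ := id he
    have : cmap (act g p) = cmap p := by
      refine Prod.ext ?_ ?_
      · show Circle.exp (Real.pi * (p.1 + g.m)) = Circle.exp (Real.pi * p.1)
        rw [Circle.exp_eq_exp]
        exact ⟨a, by rw [ha]; push_cast; ring⟩
      · show Circle.exp (2 * Real.pi * (sg g.m * p.2 + g.k)) = Circle.exp (2 * Real.pi * p.2)
        rw [sg_even he, Circle.exp_eq_exp]
        exact ⟨g.k, by push_cast; ring⟩
    rw [qmap, this, qmap]
  · obtain ⟨a, ha⟩ := id ho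
    have : cmap (act g p) = tauMap (cmap p) := by
      rw [tauMap_cmap]
      refine Prod.ext ?_ ?_
      · show Circle.exp (Real.pi * (p.1 + g.m)) = Circle.exp (Real.pi * (p.1 + 1))
        rw [Circle.exp_eq_exp]
        exact ⟨a, by rw [ha]; push_cast; ring⟩
      · show Circle.exp (2 * Real.pi * (sg g.m * p.2 + g.k)) = Circle.exp (2 * Real.pi * (-p.2))
        rw [sg_odd ho, Circle.exp_eq_exp]
        exact ⟨g.k, by push_cast; ring⟩
    rw [qmap, this, qmap]
    exact (pK_eq_iff _ _).2 (Or.inr rfl) |>.symm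

lemma exp_pi_eq (s' s : ℝ) (h : Circle.exp (Real.pi * s') = Circle.exp (Real.pi * s)) :
    ∃ m : ℤ, s' = s + 2 * m := by
  rw [Circle.exp_eq_exp] at h
  obtain ⟨m, hm⟩ := h
  refine ⟨m, ?_⟩
  have hpi := Real.pi_ne_zero
  have : Real.pi * s' = Real.pi * (s + 2 * m) := by rw [hm]; ring
  exact mul_left_cancel₀ hpi this

lemma exp_two_pi_eq (t' t : ℝ) (h : Circle.exp (2 * Real.pi * t') = Circle.exp (2 * Real.pi * t)) :
    ∃ k : ℤ, t' = t + k := by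
  rw [Circle.exp_eq_exp] at h
  obtain ⟨k, hk⟩ := h
  refine ⟨k, ?_⟩
  have hpi : (2 * Real.pi) ≠ 0 := by positivity
  have : 2 * Real.pi * t' = 2 * Real.pi * (t + k) := by rw [hk]; ring
  exact mul_left_cancel₀ hpi this

/-- Orbit characterization of the fibers of `qmap`. -/
lemma qmap_eq_iff {p p' : ℝ × ℝ} : qmap p = qmap p' ↔ ∃ g : KC, p' = act g p := by
  constructor
  · intro h
    rcases (pK_eq_iff _ _).1 h with hc | hc
    · obtain ⟨m, hm⟩ := exp_pi_eq p'.1 p.1 (congrArg Prod.fst hc)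
      obtain ⟨k, hk⟩ := exp_two_pi_eq p'.2 p.2 (congrArg Prod.snd hc)
      refine ⟨⟨2 * m, k⟩, ?_⟩
      have hsg : sg (2 * m) = 1 := sg_even ⟨m, two_mul m⟩
      refine Prod.ext ?_ ?_
      · show p'.1 = p.1 + ((2 * m : ℤ) : ℝ)
        rw [hm]; push_cast; ring
      · show p'.2 = sg (2 * m) * p.2 + (k : ℝ)
        rw [hsg, hk]; ring
    · rw [tauMap_cmap] at hc
      have h1 : Circle.exp (Real.pi * p'.1) = Circle.exp (Real.pi * (p.1 + 1)) :=
        congrArg Prod.fst hc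
      have h2 : Circle.exp (2 * Real.pi * p'.2) = Circle.exp (2 * Real.pi * (-p.2)) :=
        congrArg Prod.snd hc
      obtain ⟨m, hm⟩ := exp_pi_eq p'.1 (p.1 + 1) h1
      obtain ⟨k, hk⟩ := exp_two_pi_eq p'.2 (-p.2) h2
      refine ⟨⟨2 * m + 1, k⟩, ?_⟩
      have hsg : sg (2 * m + 1) = -1 := sg_odd ⟨m, by ring⟩
      refine Prod.ext ?_ ?_
      · show p'.1 = p.1 + ((2 * m + 1 : ℤ) : ℝ)
        rw [hm]; push_cast; ring
      · show p'.2 = sg (2 * m + 1) * p.2 + (k : ℝ)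
        rw [hsg, hk]; ring
  · rintro ⟨g, rfl⟩
    exact (qmap_act g p).symm

lemma qmap_zero : qmap (0, 0) = kleinBase := by
  have : cmap (0, 0) = (1, 1) := by
    refine Prod.ext ?_ ?_ <;>
      simpa [cmap] using Circle.exp_zero
  rw [qmap, this]; rfl

lemma qmap_int (g : KC) : qmap ((g.m : ℝ), (g.k : ℝ)) = kleinBase := by
  have : ((g.m : ℝ), (g.k : ℝ)) = act g (0, 0) := by
    refine Prod.ext ?_ ?_ <;> simp [act]
  rw [this, qmap_act, qmap_zero]

lemma act_zero (g : KC) : act g (0, 0) = ((g.m : ℝ), (g.k : ℝ)) := by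
  refine Prod.ext ?_ ?_ <;> simp [act]

lemma fiber_base {p : ℝ × ℝ} (h : qmap p = kleinBase) : ∃ g : KC, p = act g (0, 0) := by
  rw [← qmap_zero] at h
  exact qmap_eq_iff.1 h.symm |>.imp fun g hg => by
    simpa using hg

end KBproof

namespace KBproof

open Real Set Metric

/-! ### `qmap` is an open map -/

lemma isOpenMap_exp_pi : IsOpenMap (fun s : ℝ => Circle.exp (Real.pi * s)) := by
  have h1 : IsOpenMap Circle.exp := isLocalHomeomorph_circleExp.isOpenMap
  have h2 : IsOpenMap (fun s : ℝ => Real.pi * s) :=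
    (Homeomorph.mulLeft₀ (Real.pi) Real.pi_ne_zero).isOpenMap
  exact h1.comp h2

lemma isOpenMap_exp_two_pi : IsOpenMap (fun s : ℝ => Circle.exp (2 * Real.pi * s)) := by
  have h1 : IsOpenMap Circle.exp := isLocalHomeomorph_circleExp.isOpenMap
  have h2 : IsOpenMap (fun s : ℝ => 2 * Real.pi * s) :=
    (Homeomorph.mulLeft₀ (2 * Real.pi) (by positivity)).isOpenMap
  exact h1.comp h2

lemma isOpenMap_cmap : IsOpenMap cmap :=
  isOpenMap_exp_pi.prodMap isOpenMap_exp_two_pi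

lemma cmap_surjective : Function.Surjective cmap := by
  rintro ⟨x, y⟩
  refine ⟨(Complex.arg x / Real.pi, Complex.arg y / (2 * Real.pi)), ?_⟩
  have h1 : Real.pi * (Complex.arg x / Real.pi) = Complex.arg x := by
    field_simp
  have h2 : 2 * Real.pi * (Complex.arg y / (2 * Real.pi)) = Complex.arg y := by
    have : (2 * Real.pi) ≠ 0 := by positivity
    field_simp
  simp only [cmap, h1, h2]
  rw [Circle.exp_arg, Circle.exp_arg]

lemma act_odd_one (p : ℝ × ℝ) : act ⟨1, 0⟩ p = (p.1 + 1, -p.2) := by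
  have : sg 1 = -1 := sg_odd odd_one
  simp [act, this]

lemma isOpenMap_qmap : IsOpenMap qmap := by
  intro V hV
  have key : pK ⁻¹' (qmap '' V) = cmap '' (⋃ g : KC, act g '' V) := by
    ext x
    constructor
    · rintro ⟨p, hp, hq⟩
      rcases (pK_eq_iff (cmap p) x).1 hq with hc | hc
      · exact ⟨p, mem_iUnion.2 ⟨1, ⟨p, hp, act_one p⟩⟩, hc.symm⟩
      · refine ⟨act ⟨1, 0⟩ p, mem_iUnion.2 ⟨⟨1, 0⟩, ⟨p, hp, rfl⟩⟩, ?_⟩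
        rw [hc, tauMap_cmap, act_odd_one]
    · rintro ⟨e, he, rfl⟩
      obtain ⟨g, hg⟩ := mem_iUnion.1 he
      obtain ⟨p, hp, rfl⟩ := hg
      exact ⟨p, hp, (qmap_act g p).symm⟩
  have hopen : IsOpen (pK ⁻¹' (qmap '' V)) := by
    rw [key]
    refine isOpenMap_cmap _ (isOpen_iUnion fun g => ?_)
    have : act g '' V = act g⁻¹ ⁻¹' V := by
      ext y
      constructor
      · rintro ⟨p, hp, rfl⟩
        simpa [act_inv_act] using hp
      · intro hy
        exact ⟨act g⁻¹ y, hy, act_act_inv g y⟩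
    rw [this]
    exact hV.preimage (continuous_act g⁻¹)
  exact hopen

/-! ### local injectivity -/

lemma qmap_injOn_ball (x₀ : ℝ × ℝ) : Set.InjOn qmap (ball x₀ 4⁻¹) := by
  intro a ha b hb hab
  obtain ⟨g, rfl⟩ := qmap_eq_iff.1 hab
  have hdist : dist a (act g a) < 2⁻¹ := by
    calc dist a (act g a) ≤ dist a x₀ + dist x₀ (act g a) := dist_triangle _ _ _
    _ < 4⁻¹ + 4⁻¹ := by
        rw [mem_ball] at ha hb
        rw [dist_comm x₀ _]
        exact add_lt_add ha hb
    _ = 2⁻¹ := by norm_num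
  have h1 : |(g.m : ℝ)| < 2⁻¹ := by
    have := le_max_left (dist a.1 (act g a).1) (dist a.2 (act g a).2)
    rw [← Prod.dist_eq] at this
    have h2 : dist a.1 (act g a).1 < 2⁻¹ := lt_of_le_of_lt this hdist
    rw [Real.dist_eq] at h2
    have : a.1 - (act g a).1 = -(g.m : ℝ) := by simp [act]
    rw [this, abs_neg] at h2
    exact h2
  have hm : g.m = 0 := by
    have h3 : |(g.m : ℝ)| < 1 := h1.trans (by norm_num)
    have h4 : |g.m| < 1 := by exact_mod_cast (by push_cast; exact h3 : (|g.m| : ℝ) < 1)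
    exact Int.abs_lt_one_iff.mp h4
  have h2 : |(g.k : ℝ)| < 2⁻¹ := by
    have := le_max_right (dist a.1 (act g a).1) (dist a.2 (act g a).2)
    rw [← Prod.dist_eq] at this
    have h2 : dist a.2 (act g a).2 < 2⁻¹ := lt_of_le_of_lt this hdist
    rw [Real.dist_eq] at h2
    have : a.2 - (act g a).2 = -(g.k : ℝ) := by
      simp [act, hm]
    rw [this, abs_neg] at h2
    exact h2
  have hk : g.k = 0 := by
    have h3 : |(g.k : ℝ)| < 1 := h2.trans (by norm_num)
    have h4 : |g.k| < 1 := by exact_mod_cast (by push_cast; exact h3 : (|g.k| : ℝ) < 1)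
    exact Int.abs_lt_one_iff.mp h4
  have : g = 1 := by ext <;> simp [hm, hk]
  rw [this, act_one]

lemma isLocallyInjective_qmap : IsLocallyInjective qmap :=
  fun p => ⟨ball p 4⁻¹, isOpen_ball, mem_ball_self (by norm_num), qmap_injOn_ball p⟩

lemma isSeparatedMap_qmap : IsSeparatedMap qmap := T2Space.isSeparatedMap qmap

/-! ### local sections -/

/-- A local section of `qmap` over `qmap '' (ball x₀ 4⁻¹)`. -/
def sect (x₀ : ℝ × ℝ) : KleinBottle → ℝ × ℝ :=
  Function.invFunOn qmap (ball x₀ 4⁻¹)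

lemma sect_mem (x₀ : ℝ × ℝ) {y : KleinBottle} (hy : y ∈ qmap '' ball x₀ 4⁻¹) :
    sect x₀ y ∈ ball x₀ 4⁻¹ := by
  obtain ⟨p, hp, rfl⟩ := hy
  exact Function.invFunOn_mem ⟨p, hp, rfl⟩

lemma qmap_sect (x₀ : ℝ × ℝ) {y : KleinBottle} (hy : y ∈ qmap '' ball x₀ 4⁻¹) :
    qmap (sect x₀ y) = y := by
  obtain ⟨p, hp, rfl⟩ := hy
  exact Function.invFunOn_eq ⟨p, hp, rfl⟩

lemma sect_continuousOn (x₀ : ℝ × ℝ) : ContinuousOn (sect x₀) (qmap '' ball x₀ 4⁻¹) := by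
  intro y hy
  rw [ContinuousWithinAt, _root_.tendsto_nhds]
  intro W hWopen hWmem
  apply mem_nhdsWithin.2
  refine ⟨qmap '' (W ∩ ball x₀ 4⁻¹), isOpenMap_qmap _ (hWopen.inter isOpen_ball), ?_, ?_⟩
  · exact ⟨sect x₀ y, ⟨hWmem, sect_mem x₀ hy⟩, qmap_sect x₀ hy⟩
  · rintro z ⟨⟨w, ⟨hwW, hwB⟩, rfl⟩, hzU⟩
    have h1 : sect x₀ (qmap w) ∈ ball x₀ 4⁻¹ := sect_mem x₀ ⟨w, hwB, rfl⟩
    have h2 : qmap (sect x₀ (qmap w)) = qmap w := qmap_sect x₀ ⟨w, hwB, rfl⟩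
    have : sect x₀ (qmap w) = w := qmap_injOn_ball x₀ h1 hwB h2
    simpa [this] using hwW

/-! ### pasting lemma -/

lemma continuousOn_union_of_isClosed {α β : Type*} [TopologicalSpace α] [TopologicalSpace β]
    {A B : Set α} {F : α → β} (hA : IsClosed A) (hB : IsClosed B)
    (hFA : ContinuousOn F A) (hFB : ContinuousOn F B) : ContinuousOn F (A ∪ B) := by
  intro y hy
  have cA : ContinuousWithinAt F A y := by
    by_cases h : y ∈ A
    · exact hFA y h
    · exact continuousWithinAt_of_notMem_closure (by rwa [hA.closure_eq])
  have cB : ContinuousWithinAt F B y := by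
    by_cases h : y ∈ B
    · exact hFB y h
    · exact continuousWithinAt_of_notMem_closure (by rwa [hB.closure_eq])
  exact cA.union cB

/-! ### lifting over one small cell -/

/-- `L` is a lift of `H` on `S`. -/
def IsLiftOn (L : ℝ × ℝ → ℝ × ℝ) (H : ℝ × ℝ → KleinBottle) (S : Set (ℝ × ℝ)) : Prop :=
  ContinuousOn L S ∧ ∀ p ∈ S, qmap (L p) = H p

lemma cellExtend {H : ℝ × ℝ → KleinBottle} (hH : Continuous H) {R C : Set (ℝ × ℝ)}
    (hRcl : IsClosed R) (hCcl : IsClosed C) (hRC : IsPreconnected (R ∩ C))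
    {z₀ : ℝ × ℝ} (hz₀ : z₀ ∈ R ∩ C) {x₀ : ℝ × ℝ}
    (hCU : ∀ p ∈ C, H p ∈ qmap '' ball x₀ 4⁻¹) {L₀ : ℝ × ℝ → ℝ × ℝ}
    (h₀ : IsLiftOn L₀ H R) :
    ∃ L : ℝ × ℝ → ℝ × ℝ, IsLiftOn L H (R ∪ C) ∧ Set.EqOn L L₀ R := by
  classical
  obtain ⟨hL₀c, hL₀q⟩ := h₀
  -- the group element:
  have hq0 : qmap (L₀ z₀) = qmap (sect x₀ (H z₀)) := by
    rw [hL₀q z₀ hz₀.1, qmap_sect x₀ (hCU z₀ hz₀.2)]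
  obtain ⟨g₀, hg₀⟩ := qmap_eq_iff.1 hq0.symm
  set F : ℝ × ℝ → ℝ × ℝ := fun p => act g₀ (sect x₀ (H p)) with hF
  have hFc : ContinuousOn F C := by
    apply (continuous_act g₀).comp_continuousOn
    exact (sect_continuousOn x₀).comp hH.continuousOn (fun p hp => hCU p hp)
  have hFq : ∀ p ∈ C, qmap (F p) = H p := fun p hp => by
    rw [hF]; simp only
    rw [qmap_act, qmap_sect x₀ (hCU p hp)]
  -- `L₀` and `F` agree on `R ∩ C`
  have hagree : Set.EqOn L₀ F (R ∩ C) := by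
    apply isSeparatedMap_qmap.eqOn_of_comp_eqOn isLocallyInjective_qmap hRC
      (hL₀c.mono inter_subset_left) (hFc.mono inter_subset_right) ?_ hz₀ ?_
    · intro p hp
      show qmap (L₀ p) = qmap (F p)
      rw [hL₀q p hp.1, hFq p hp.2]
    · show L₀ z₀ = F z₀
      rw [hF]
      exact hg₀.symm ▸ hg₀
  refine ⟨fun p => if p ∈ R then L₀ p else F p, ⟨?_, ?_⟩, ?_⟩
  · apply continuousOn_union_of_isClosed hRcl hCcl
    · apply hL₀c.congr
      intro p hp
      simp [hp]
    · apply hFc.congr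
      intro p hp
      by_cases h : p ∈ R
      · simp only [h, if_true]
        exact hagree ⟨h, hp⟩
      · simp [h]
  · intro p hp
    by_cases h : p ∈ R
    · simpa [h] using hL₀q p h
    · have hpC : p ∈ C := hp.resolve_left h
      simpa [h] using hFq p hpC
  · intro p hp
    simp [hp]
end KBproof

namespace KBproof

open Real Set Metric

lemma qmap_surjective : Function.Surjective qmap := by
  intro y
  obtain ⟨v, rfl⟩ := Quotient.exists_rep y
  obtain ⟨p, rfl⟩ := cmap_surjective v
  exact ⟨p, rfl⟩

theorem squareLift {H : ℝ × ℝ → KleinBottle} (hH : Continuous H) (e₀ : ℝ × ℝ)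
    (he : qmap e₀ = H (0, 0)) :
    ∃ L : ℝ × ℝ → ℝ × ℝ, IsLiftOn L H (Icc (0:ℝ) 1 ×ˢ Icc (0:ℝ) 1) ∧ L (0, 0) = e₀ := by
  -- Lebesgue number for the covering of the square by evenly covered patches
  have hQc : IsCompact (Icc (0:ℝ) 1 ×ˢ Icc (0:ℝ) 1) := isCompact_Icc.prod isCompact_Icc
  have hopen : ∀ x₀ : ℝ × ℝ, IsOpen (H ⁻¹' (qmap '' ball x₀ 4⁻¹)) := fun x₀ =>
    (isOpenMap_qmap _ isOpen_ball).preimage hH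
  have hsub : Icc (0:ℝ) 1 ×ˢ Icc (0:ℝ) 1 ⊆ ⋃ x₀ : ℝ × ℝ, H ⁻¹' (qmap '' ball x₀ 4⁻¹) := by
    intro p _
    obtain ⟨w, hw⟩ := qmap_surjective (H p)
    exact mem_iUnion.2 ⟨w, show H p ∈ qmap '' ball w 4⁻¹ from
      ⟨w, mem_ball_self (by norm_num), hw⟩⟩
  obtain ⟨δ, hδpos, hδ⟩ := lebesgue_number_lemma_of_metric hQc hopen hsub
  obtain ⟨n, hn⟩ := exists_nat_one_div_lt hδpos
  set N : ℕ := n + 1 with hN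
  have hN0 : 0 < N := Nat.succ_pos n
  have hNr : (0:ℝ) < N := by exact_mod_cast hN0
  have hNd : 1 / (N:ℝ) < δ := by
    rw [hN]; push_cast; exact hn
  -- the small cells are contained in evenly covered patches
  have cellCover : ∀ i j : ℕ, i < N → j < N → ∃ x₀ : ℝ × ℝ,
      ∀ p ∈ Icc ((i:ℝ)/N) (((i:ℝ)+1)/N) ×ˢ Icc ((j:ℝ)/N) (((j:ℝ)+1)/N),
        H p ∈ qmap '' ball x₀ 4⁻¹ := by
    intro i j hi hj
    have hiN : (i:ℝ) ≤ N := by exact_mod_cast hi.le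
    have hjN : (j:ℝ) ≤ N := by exact_mod_cast hj.le
    have hcorner : ((i:ℝ)/N, (j:ℝ)/N) ∈ Icc (0:ℝ) 1 ×ˢ Icc (0:ℝ) 1 := by
      constructor
      · exact ⟨div_nonneg (Nat.cast_nonneg i) hNr.le, (div_le_one hNr).2 hiN⟩
      · exact ⟨div_nonneg (Nat.cast_nonneg j) hNr.le, (div_le_one hNr).2 hjN⟩
    obtain ⟨x₀, hx₀⟩ := hδ _ hcorner
    refine ⟨x₀, fun p hp => hx₀ ?_⟩
    rw [mem_ball, Prod.dist_eq]
    have h1 : dist p.1 ((i:ℝ)/N) ≤ 1 / N := by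
      rw [Real.dist_eq, abs_le]
      obtain ⟨⟨ha, hb⟩, _⟩ := hp
      have : ((i:ℝ)+1)/N = (i:ℝ)/N + 1/N := by ring
      constructor <;> [linarith [div_nonneg (Nat.cast_nonneg i) hNr.le,
        one_div_pos.2 hNr]; linarith [this ▸ hb]]
    have h2 : dist p.2 ((j:ℝ)/N) ≤ 1 / N := by
      rw [Real.dist_eq, abs_le]
      obtain ⟨_, ⟨ha, hb⟩⟩ := hp
      have : ((j:ℝ)+1)/N = (j:ℝ)/N + 1/N := by ring
      constructor <;> [linarith [one_div_pos.2 hNr]; linarith [this ▸ hb]]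
    exact max_lt (h1.trans_lt hNd) (h2.trans_lt hNd)
  -- arithmetic helpers
  have hd0 : ∀ i : ℕ, (0:ℝ) ≤ (i:ℝ)/N := fun i => div_nonneg (Nat.cast_nonneg i) hNr.le
  have hdm : ∀ i : ℕ, (i:ℝ)/N ≤ ((i:ℝ)+1)/N := fun i => by gcongr; linarith
  have hNne : (N:ℝ) ≠ 0 := hNr.ne'
  have hNN : (N:ℝ)/N = 1 := div_self hNne
  have hIccInter : ∀ {a b c : ℝ}, a ≤ b → b ≤ c → Icc a b ∩ Icc b c = {b} := by
    intro a b c hab hbc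
    rw [Icc_inter_Icc, max_eq_right hab, min_eq_left hbc, Icc_self]
  -- Stage 1: lifting along the bottom edge
  have claim1 : ∀ i : ℕ, i ≤ N →
      ∃ L, IsLiftOn L H (Icc (0:ℝ) ((i:ℝ)/N) ×ˢ Icc (0:ℝ) 0) ∧ L (0, 0) = e₀ := by
    intro i
    induction i with
    | zero =>
        intro _
        refine ⟨fun _ => e₀, ⟨continuousOn_const, ?_⟩, rfl⟩
        intro p hp
        simp only [Nat.cast_zero, zero_div, Icc_self, Set.singleton_prod_singleton,
          mem_singleton_iff] at hp
        rw [hp]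
        exact he
    | succ i ih =>
        intro hi1
        have hiN : i < N := hi1
        obtain ⟨L₀, h₀, hL₀e⟩ := ih (Nat.le_of_succ_le hi1)
        obtain ⟨x₀, hx₀⟩ := cellCover i 0 hiN hN0
        simp only [Nat.cast_zero, zero_div, zero_add] at hx₀
        have hC : ∀ p ∈ Icc ((i:ℝ)/N) (((i:ℝ)+1)/N) ×ˢ Icc (0:ℝ) 0,
            H p ∈ qmap '' ball x₀ 4⁻¹ := fun p hp =>
          hx₀ p ⟨hp.1, ⟨hp.2.1, hp.2.2.trans (by positivity)⟩⟩
        have hinter : (Icc (0:ℝ) ((i:ℝ)/N) ×ˢ Icc (0:ℝ) 0) ∩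
            (Icc ((i:ℝ)/N) (((i:ℝ)+1)/N) ×ˢ Icc (0:ℝ) 0)
            = {(((i:ℝ)/N), (0:ℝ))} := by
          rw [Set.prod_inter_prod, hIccInter (hd0 i) (hdm i), inter_self, Icc_self,
            Set.singleton_prod_singleton]
        obtain ⟨L, hL, hLeq⟩ := cellExtend hH (isClosed_Icc.prod isClosed_Icc)
          (isClosed_Icc.prod isClosed_Icc)
          (by rw [hinter]; exact isPreconnected_singleton)
          (show _ ∈ _ ∩ _ by rw [hinter]; exact rfl) hC ⟨h₀.1, h₀.2⟩
        refine ⟨L, ?_, ?_⟩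
        · have hU : (Icc (0:ℝ) ((i:ℝ)/N) ×ˢ Icc (0:ℝ) 0) ∪
              (Icc ((i:ℝ)/N) (((i:ℝ)+1)/N) ×ˢ Icc (0:ℝ) 0)
              = Icc (0:ℝ) ((((i+1:ℕ)):ℝ)/N) ×ˢ Icc (0:ℝ) 0 := by
            rw [← Set.union_prod, Icc_union_Icc_eq_Icc (hd0 i) (hdm i)]
            push_cast
            rfl
          rw [← hU]
          exact hL
        · have h00 : ((0:ℝ), (0:ℝ)) ∈ Icc (0:ℝ) ((i:ℝ)/N) ×ˢ Icc (0:ℝ) 0 :=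
            ⟨⟨le_refl 0, hd0 i⟩, ⟨le_refl 0, le_refl 0⟩⟩
          rw [hLeq h00, hL₀e]
  -- Stage 2: extending a lift over one row
  have claim2 : ∀ j : ℕ, j < N →
      (∃ L, IsLiftOn L H (Icc (0:ℝ) 1 ×ˢ Icc (0:ℝ) ((j:ℝ)/N)) ∧ L (0, 0) = e₀) →
      ∃ L, IsLiftOn L H (Icc (0:ℝ) 1 ×ˢ Icc (0:ℝ) ((((j+1:ℕ)):ℝ)/N)) ∧ L (0, 0) = e₀ := by
    intro j hjN hrow
    have inner : ∀ i : ℕ, i ≤ N →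
        ∃ L, IsLiftOn L H ((Icc (0:ℝ) 1 ×ˢ Icc (0:ℝ) ((j:ℝ)/N)) ∪
          (Icc (0:ℝ) ((i:ℝ)/N) ×ˢ Icc ((j:ℝ)/N) (((j:ℝ)+1)/N))) ∧ L (0, 0) = e₀ := by
      intro i
      induction i with
      | zero =>
          intro _
          obtain ⟨L₀, h₀, hL₀e⟩ := hrow
          obtain ⟨x₀, hx₀⟩ := cellCover 0 j hN0 hjN
          simp only [Nat.cast_zero, zero_div, zero_add] at hx₀
          have hC : ∀ p ∈ Icc (0:ℝ) 0 ×ˢ Icc ((j:ℝ)/N) (((j:ℝ)+1)/N),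
              H p ∈ qmap '' ball x₀ 4⁻¹ := fun p hp =>
            hx₀ p ⟨⟨hp.1.1, hp.1.2.trans (by positivity)⟩, hp.2⟩
          have hinter : (Icc (0:ℝ) 1 ×ˢ Icc (0:ℝ) ((j:ℝ)/N)) ∩
              (Icc (0:ℝ) 0 ×ˢ Icc ((j:ℝ)/N) (((j:ℝ)+1)/N))
              = {((0:ℝ), ((j:ℝ)/N))} := by
            rw [Set.prod_inter_prod, hIccInter (hd0 j) (hdm j)]
            rw [show Icc (0:ℝ) 1 ∩ Icc (0:ℝ) 0 = {0} by
              rw [Icc_inter_Icc, max_self, min_eq_right zero_le_one, Icc_self]]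
            exact Set.singleton_prod_singleton
          obtain ⟨L, hL, hLeq⟩ := cellExtend hH (isClosed_Icc.prod isClosed_Icc)
            (isClosed_Icc.prod isClosed_Icc)
            (by rw [hinter]; exact isPreconnected_singleton)
            (show _ ∈ _ ∩ _ by rw [hinter]; exact rfl) hC ⟨h₀.1, h₀.2⟩
          refine ⟨L, ?_, ?_⟩
          · have : Icc (0:ℝ) (((0:ℕ):ℝ)/N) = Icc (0:ℝ) 0 := by norm_num
            rw [this]
            exact hL
          · have h00 : ((0:ℝ), (0:ℝ)) ∈ Icc (0:ℝ) 1 ×ˢ Icc (0:ℝ) ((j:ℝ)/N) :=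
              ⟨⟨le_refl 0, zero_le_one⟩, ⟨le_refl 0, hd0 j⟩⟩
            rw [hLeq h00, hL₀e]
      | succ i ih =>
          intro hi1
          have hiN : i < N := hi1
          obtain ⟨L₀, h₀, hL₀e⟩ := ih (Nat.le_of_succ_le hi1)
          obtain ⟨x₀, hx₀⟩ := cellCover i j hiN hjN
          have hi1N : ((i:ℝ)+1)/N ≤ 1 := by
            rw [div_le_one hNr]
            exact_mod_cast hi1
          have hinter : ((Icc (0:ℝ) 1 ×ˢ Icc (0:ℝ) ((j:ℝ)/N)) ∪
                (Icc (0:ℝ) ((i:ℝ)/N) ×ˢ Icc ((j:ℝ)/N) (((j:ℝ)+1)/N))) ∩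
              (Icc ((i:ℝ)/N) (((i:ℝ)+1)/N) ×ˢ Icc ((j:ℝ)/N) (((j:ℝ)+1)/N))
              = (Icc ((i:ℝ)/N) (((i:ℝ)+1)/N) ×ˢ ({(j:ℝ)/N} : Set ℝ)) ∪
                (({(i:ℝ)/N} : Set ℝ) ×ˢ Icc ((j:ℝ)/N) (((j:ℝ)+1)/N)) := by
            rw [Set.union_inter_distrib_right, Set.prod_inter_prod, Set.prod_inter_prod]
            rw [hIccInter (hd0 j) (hdm j), hIccInter (hd0 i) (hdm i), inter_self]
            rw [show Icc (0:ℝ) 1 ∩ Icc ((i:ℝ)/N) (((i:ℝ)+1)/N)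
                = Icc ((i:ℝ)/N) (((i:ℝ)+1)/N) by
              rw [Icc_inter_Icc, max_eq_right (hd0 i), min_eq_right hi1N]]
          have hpre : IsPreconnected ((Icc ((i:ℝ)/N) (((i:ℝ)+1)/N) ×ˢ ({(j:ℝ)/N} : Set ℝ)) ∪
              (({(i:ℝ)/N} : Set ℝ) ×ˢ Icc ((j:ℝ)/N) (((j:ℝ)+1)/N))) := by
            apply IsPreconnected.union (((i:ℝ)/N), ((j:ℝ)/N))
            · exact ⟨⟨le_refl _, hdm i⟩, rfl⟩
            · exact ⟨rfl, ⟨le_refl _, hdm j⟩⟩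
            · exact ((convex_Icc _ _).prod (convex_singleton _)).isPreconnected
            · exact ((convex_singleton _).prod (convex_Icc _ _)).isPreconnected
          have hmem : (((i:ℝ)/N), ((j:ℝ)/N)) ∈ ((Icc (0:ℝ) 1 ×ˢ Icc (0:ℝ) ((j:ℝ)/N)) ∪
                (Icc (0:ℝ) ((i:ℝ)/N) ×ˢ Icc ((j:ℝ)/N) (((j:ℝ)+1)/N))) ∩
              (Icc ((i:ℝ)/N) (((i:ℝ)+1)/N) ×ˢ Icc ((j:ℝ)/N) (((j:ℝ)+1)/N)) := by
            constructor
            · exact Or.inr ⟨⟨hd0 i, le_refl _⟩, ⟨le_refl _, hdm j⟩⟩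
            · exact ⟨⟨le_refl _, hdm i⟩, ⟨le_refl _, hdm j⟩⟩
          have hclosedR : IsClosed ((Icc (0:ℝ) 1 ×ˢ Icc (0:ℝ) ((j:ℝ)/N)) ∪
              (Icc (0:ℝ) ((i:ℝ)/N) ×ˢ Icc ((j:ℝ)/N) (((j:ℝ)+1)/N))) :=
            (isClosed_Icc.prod isClosed_Icc).union (isClosed_Icc.prod isClosed_Icc)
          obtain ⟨L, hL, hLeq⟩ := cellExtend hH hclosedR (isClosed_Icc.prod isClosed_Icc)
            (by rw [hinter]; exact hpre) hmem (hx₀) ⟨h₀.1, h₀.2⟩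
          refine ⟨L, ?_, ?_⟩
          · have hU : ((Icc (0:ℝ) 1 ×ˢ Icc (0:ℝ) ((j:ℝ)/N)) ∪
                (Icc (0:ℝ) ((i:ℝ)/N) ×ˢ Icc ((j:ℝ)/N) (((j:ℝ)+1)/N))) ∪
                (Icc ((i:ℝ)/N) (((i:ℝ)+1)/N) ×ˢ Icc ((j:ℝ)/N) (((j:ℝ)+1)/N))
                = (Icc (0:ℝ) 1 ×ˢ Icc (0:ℝ) ((j:ℝ)/N)) ∪
                  (Icc (0:ℝ) ((((i+1:ℕ)):ℝ)/N) ×ˢ Icc ((j:ℝ)/N) (((j:ℝ)+1)/N)) := by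
              rw [Set.union_assoc, ← Set.union_prod,
                Icc_union_Icc_eq_Icc (hd0 i) (hdm i)]
              push_cast
              rfl
            rw [← hU]
            exact hL
          · have h00 : ((0:ℝ), (0:ℝ)) ∈ (Icc (0:ℝ) 1 ×ˢ Icc (0:ℝ) ((j:ℝ)/N)) ∪
                (Icc (0:ℝ) ((i:ℝ)/N) ×ˢ Icc ((j:ℝ)/N) (((j:ℝ)+1)/N)) :=
              Or.inl ⟨⟨le_refl 0, zero_le_one⟩, ⟨le_refl 0, hd0 j⟩⟩
            rw [hLeq h00, hL₀e]
    obtain ⟨L, hL, hLe⟩ := inner N (le_refl N)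
    refine ⟨L, ?_, hLe⟩
    have hU : (Icc (0:ℝ) 1 ×ˢ Icc (0:ℝ) ((j:ℝ)/N)) ∪
        (Icc (0:ℝ) (((N:ℕ):ℝ)/N) ×ˢ Icc ((j:ℝ)/N) (((j:ℝ)+1)/N))
        = Icc (0:ℝ) 1 ×ˢ Icc (0:ℝ) ((((j+1:ℕ)):ℝ)/N) := by
      rw [hNN, ← Set.prod_union, Icc_union_Icc_eq_Icc (hd0 j) (hdm j)]
      push_cast
      rfl
    rw [← hU]
    exact hL
  -- Stage 3: stacking the rows
  have claim3 : ∀ j : ℕ, j ≤ N →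
      ∃ L, IsLiftOn L H (Icc (0:ℝ) 1 ×ˢ Icc (0:ℝ) ((j:ℝ)/N)) ∧ L (0, 0) = e₀ := by
    intro j
    induction j with
    | zero =>
        intro _
        obtain ⟨L, hL, hLe⟩ := claim1 N (le_refl N)
        rw [hNN] at hL
        refine ⟨L, ?_, hLe⟩
        simpa using hL
    | succ j ih =>
        intro hj1
        have := claim2 j hj1 (ih (Nat.le_of_succ_le hj1))
        obtain ⟨L, hL, hLe⟩ := this
        refine ⟨L, ?_, hLe⟩
        push_cast at hL ⊢
        exact hL
  obtain ⟨L, hL, hLe⟩ := claim3 N (le_refl N)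
  rw [hNN] at hL
  exact ⟨L, hL, hLe⟩

end KBproof

namespace KBproof

open Real Set Metric unitInterval

/-- Uniqueness of lifts along the unit interval. -/
lemma lift_unique {γ : I → KleinBottle} {P P' : I → ℝ × ℝ}
    (hPc : Continuous P) (hP'c : Continuous P')
    (hP : ∀ t, qmap (P t) = γ t) (hP' : ∀ t, qmap (P' t) = γ t)
    (h0 : P 0 = P' 0) : ∀ t, P t = P' t := by
  have heq : qmap ∘ P = qmap ∘ P' := funext fun t => (hP t).trans (hP' t).symm
  have := isSeparatedMap_qmap.eq_of_comp_eq isLocallyInjective_qmap hPc hP'c heq 0 h0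
  exact fun t => congrFun this t

/-- Path lifting for `qmap`. -/
lemma pathLift {x y : KleinBottle} (γ : Path x y) (e₀ : ℝ × ℝ) (he : qmap e₀ = x) :
    ∃ (e₁ : ℝ × ℝ) (P : Path e₀ e₁), ∀ t, qmap (P t) = γ t := by
  set H : ℝ × ℝ → KleinBottle := fun p => γ (projIcc 0 1 zero_le_one p.1) with hHdef
  have hHc : Continuous H := γ.continuous.comp (continuous_projIcc.comp continuous_fst)
  have hH00 : H (0, 0) = x := by
    show γ (projIcc 0 1 zero_le_one 0) = x
    rw [projIcc_left]
    exact γ.source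
  obtain ⟨L, ⟨hLc, hLq⟩, hL0⟩ := squareLift hHc e₀ (by rw [hH00]; exact he)
  have hmem : ∀ t : I, ((t:ℝ), (0:ℝ)) ∈ Icc (0:ℝ) 1 ×ˢ Icc (0:ℝ) 1 :=
    fun t => ⟨⟨t.2.1, t.2.2⟩, ⟨le_refl 0, zero_le_one⟩⟩
  have hPc : Continuous fun t : I => L ((t:ℝ), (0:ℝ)) :=
    hLc.comp_continuous (continuous_subtype_val.prodMk continuous_const) hmem
  refine ⟨L (1, 0), ⟨⟨fun t => L ((t:ℝ), 0), hPc⟩, ?_, ?_⟩, ?_⟩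
  · show L ((0:ℝ), (0:ℝ)) = e₀
    exact hL0
  · rfl
  · intro t
    show qmap (L ((t:ℝ), 0)) = γ t
    rw [hLq _ (hmem t)]
    show γ (projIcc 0 1 zero_le_one (t:ℝ)) = γ t
    rw [projIcc_val]

/-- Lifts of homotopic paths starting at the same point end at the same point. -/
lemma lift_end_eq {x y : KleinBottle} {γ γ' : Path x y} (h : γ.Homotopic γ')
    {e₀ e₁ e₁' : ℝ × ℝ} (P : Path e₀ e₁) (P' : Path e₀ e₁')
    (hP : ∀ t, qmap (P t) = γ t) (hP' : ∀ t, qmap (P' t) = γ' t) : e₁ = e₁' := by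
  obtain ⟨F⟩ := h
  set H : ℝ × ℝ → KleinBottle :=
    fun p => F (projIcc 0 1 zero_le_one p.1, projIcc 0 1 zero_le_one p.2) with hHdef
  have hHc : Continuous H :=
    F.continuous.comp ((continuous_projIcc.comp continuous_fst).prodMk
      (continuous_projIcc.comp continuous_snd))
  have hqe₀ : qmap e₀ = x := by
    have := hP 0
    rwa [P.source, γ.source] at this
  have hH00 : H (0, 0) = x := by
    show F (projIcc 0 1 zero_le_one 0, projIcc 0 1 zero_le_one 0) = x
    rw [projIcc_left]
    exact F.source _
  obtain ⟨L, ⟨hLc, hLq⟩, hL0⟩ := squareLift hHc e₀ (by rw [hH00]; exact hqe₀)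
  have hmemL : ∀ s t : I, ((s:ℝ), (t:ℝ)) ∈ Icc (0:ℝ) 1 ×ˢ Icc (0:ℝ) 1 :=
    fun s t => ⟨⟨s.2.1, s.2.2⟩, ⟨t.2.1, t.2.2⟩⟩
  have hLst : ∀ s t : I, qmap (L ((s:ℝ), (t:ℝ))) = F (s, t) := by
    intro s t
    rw [hLq _ (hmemL s t)]
    show F (projIcc 0 1 zero_le_one (s:ℝ), projIcc 0 1 zero_le_one (t:ℝ)) = F (s, t)
    rw [projIcc_val, projIcc_val]
  -- the left edge is the lift of `γ`
  have hA : ∀ t : I, L ((0:ℝ), (t:ℝ)) = P t := by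
    apply lift_unique (γ := fun t => γ t)
    · exact hLc.comp_continuous
        (continuous_const.prodMk continuous_subtype_val) (fun t => hmemL 0 t)
    · exact P.continuous
    · intro t
      have := hLst 0 t
      rwa [F.apply_zero] at this
    · exact hP
    · show L ((0:ℝ), (0:ℝ)) = P 0
      rw [P.source]
      exact hL0
  -- the bottom edge is constant
  have hB : ∀ s : I, L ((s:ℝ), (0:ℝ)) = e₀ := by
    apply lift_unique (γ := fun _ => x) (P' := fun _ => e₀)
    · exact hLc.comp_continuous
        (continuous_subtype_val.prodMk continuous_const) (fun s => hmemL s 0)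
    · exact continuous_const
    · intro s
      have := hLst s 0
      rwa [F.source] at this
    · exact fun _ => hqe₀
    · exact hL0
  -- the top edge is constant
  have hT : ∀ s : I, L ((s:ℝ), (1:ℝ)) = L ((0:ℝ), (1:ℝ)) := by
    apply lift_unique (γ := fun _ => y) (P' := fun _ => L ((0:ℝ), (1:ℝ)))
    · exact hLc.comp_continuous
        (continuous_subtype_val.prodMk continuous_const) (fun s => hmemL s 1)
    · exact continuous_const
    · intro s
      have := hLst s 1
      rwa [F.target] at this
    · intro s
      have := hLst 0 1
      rwa [F.target] at this
    · rfl
  -- the right edge is the lift of `γ'`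
  have hD : ∀ t : I, L ((1:ℝ), (t:ℝ)) = P' t := by
    apply lift_unique (γ := fun t => γ' t)
    · exact hLc.comp_continuous
        (continuous_const.prodMk continuous_subtype_val) (fun t => hmemL 1 t)
    · exact P'.continuous
    · intro t
      have := hLst 1 t
      rwa [F.apply_one] at this
    · exact hP'
    · show L ((1:ℝ), (0:ℝ)) = P' 0
      rw [P'.source]
      exact hB 1
  calc e₁ = P 1 := P.target.symm
  _ = L ((0:ℝ), (1:ℝ)) := (hA 1).symm
  _ = L ((1:ℝ), (1:ℝ)) := (hT 1).symm
  _ = P' 1 := hD 1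
  _ = e₁' := P'.target

end KBproof

namespace KBproof

open Real Set Metric unitInterval CategoryTheory

attribute [local instance] Path.Homotopic.setoid

/-- Extract the homotopy class of loops from an element of the fundamental group. -/
def toQ (a : FundamentalGroup KleinBottle kleinBase) :
    Path.Homotopic.Quotient kleinBase kleinBase := a

/-- Build an element of the fundamental group from a homotopy class of loops. -/
def ofQ (p : Path.Homotopic.Quotient kleinBase kleinBase) :
    FundamentalGroup KleinBottle kleinBase :=
  FundamentalGroup.fromPath p

lemma toQ_ofQ (p : Path.Homotopic.Quotient kleinBase kleinBase) : toQ (ofQ p) = p := rfl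

lemma toQ_injective : Function.Injective toQ := by
  intro a b h
  exact h

lemma toQ_one : toQ 1 = ⟦Path.refl kleinBase⟧ := rfl

lemma toQ_mul (a b : FundamentalGroup KleinBottle kleinBase) :
    toQ (a * b) = (toQ b).trans (toQ a) := rfl

lemma qmap_lift_trans {x y z : KleinBottle} {γ1 : Path x y} {γ2 : Path y z}
    {p q r : ℝ × ℝ} {P1 : Path p q} {P2 : Path q r}
    (h1 : ∀ t, qmap (P1 t) = γ1 t) (h2 : ∀ t, qmap (P2 t) = γ2 t) :
    ∀ t, qmap ((P1.trans P2) t) = (γ1.trans γ2) t := by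
  intro t
  rw [Path.trans_apply, Path.trans_apply]
  split_ifs with h
  · exact h1 _
  · exact h2 _

/-- The monodromy relation: `g` is the end of a lift of a loop representing `a`. -/
def Mon (a : FundamentalGroup KleinBottle kleinBase) (g : KC) : Prop :=
  ∃ (γ : Path kleinBase kleinBase) (P : Path ((0:ℝ), (0:ℝ)) (act g (0, 0))),
    ⟦γ⟧ = toQ a ∧ ∀ t, qmap (P t) = γ t

lemma act_cancel {g g' : KC} {p : ℝ × ℝ} (h : act g p = act g' p) : g = g' := by
  have h1 : act (g'⁻¹ * g) p = p := by
    rw [← act_act, h, act_inv_act]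
  have := act_fixed h1
  rwa [inv_mul_eq_one, eq_comm] at this

lemma mon_exists (a : FundamentalGroup KleinBottle kleinBase) : ∃ g, Mon a g := by
  obtain ⟨γ, hγ⟩ := Quotient.exists_rep (toQ a)
  obtain ⟨e₁, P, hP⟩ := pathLift γ (0, 0) qmap_zero
  have he₁ : qmap e₁ = kleinBase := by
    have := hP 1
    rwa [P.target, γ.target] at this
  obtain ⟨g, hg⟩ := fiber_base he₁
  exact ⟨g, γ, P.cast rfl hg.symm, hγ, by
    intro t
    show qmap ((P.cast rfl hg.symm) t) = γ t
    rw [Path.cast_coe]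
    exact hP t⟩

lemma mon_unique {a : FundamentalGroup KleinBottle kleinBase} {g g' : KC}
    (h : Mon a g) (h' : Mon a g') : g = g' := by
  obtain ⟨γ, P, hγ, hP⟩ := h
  obtain ⟨γ', P', hγ', hP'⟩ := h'
  have hhom : γ.Homotopic γ' := Quotient.exact (hγ.trans hγ'.symm)
  exact act_cancel (lift_end_eq hhom P P' hP hP')

/-- The monodromy element of a loop class. -/
def mon (a : FundamentalGroup KleinBottle kleinBase) : KC := (mon_exists a).choose

lemma mon_spec (a : FundamentalGroup KleinBottle kleinBase) : Mon a (mon a) :=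
  (mon_exists a).choose_spec

lemma mon_eq {a : FundamentalGroup KleinBottle kleinBase} {g : KC} (h : Mon a g) :
    mon a = g := mon_unique (mon_spec a) h

lemma mon_one : mon 1 = 1 := by
  apply mon_eq
  refine ⟨Path.refl kleinBase, (Path.refl ((0:ℝ),(0:ℝ))).cast rfl (act_one _), ?_, ?_⟩
  · exact toQ_one.symm
  · intro t
    show qmap (((Path.refl ((0:ℝ),(0:ℝ))).cast rfl (act_one _)) t) = kleinBase
    rw [Path.cast_coe]
    exact qmap_zero

lemma mon_mul (a b : FundamentalGroup KleinBottle kleinBase) :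
    mon (a * b) = mon b * mon a := by
  apply mon_eq
  obtain ⟨γa, Pa, hγa, hPa⟩ := mon_spec a
  obtain ⟨γb, Pb, hγb, hPb⟩ := mon_spec b
  have hQc : act (mon b) (act (mon a) (0, 0)) = act (mon b * mon a) (0, 0) :=
    act_act _ _ _
  set Q : Path (act (mon b) ((0:ℝ),(0:ℝ))) (act (mon b * mon a) (0, 0)) :=
    (Pa.map (continuous_act (mon b))).cast rfl hQc.symm with hQ
  have hQlift : ∀ t, qmap (Q t) = γa t := by
    intro t
    rw [hQ]
    show qmap (((Pa.map (continuous_act (mon b))).cast rfl hQc.symm) t) = γa t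
    rw [Path.cast_coe]
    show qmap (act (mon b) (Pa t)) = γa t
    rw [qmap_act]
    exact hPa t
  refine ⟨γb.trans γa, Pb.trans Q, ?_, qmap_lift_trans hPb hQlift⟩
  rw [toQ_mul, ← hγa, ← hγb]
  exact (Path.Homotopic.Quotient.mk_trans γb γa).symm

lemma mon_eq_one_imp {a : FundamentalGroup KleinBottle kleinBase} (h : mon a = 1) :
    a = 1 := by
  obtain ⟨γ, P, hγ, hP⟩ := mon_spec a
  have hend : act (mon a) ((0:ℝ), (0:ℝ)) = ((0:ℝ), (0:ℝ)) := by
    rw [h]; exact act_one _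
  set Pc : Path ((0:ℝ),(0:ℝ)) ((0:ℝ),(0:ℝ)) := P.cast rfl hend.symm with hPc
  have hPl : ∀ t, qmap (Pc t) = γ t := by
    intro t
    rw [hPc]
    show qmap ((P.cast rfl hend.symm) t) = γ t
    rw [Path.cast_coe]
    exact hP t
  -- `Pc` is a loop in the simply connected plane, hence nullhomotopic
  have hhom : Pc.Homotopic (Path.refl ((0:ℝ),(0:ℝ))) :=
    SimplyConnectedSpace.paths_homotopic _ _
  have hmap : (Pc.map continuous_qmap).Homotopic ((Path.refl ((0:ℝ),(0:ℝ))).map continuous_qmap) :=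
    Path.Homotopic.map hhom ⟨qmap, continuous_qmap⟩
  have h1 : HEq (⟦γ⟧ : Path.Homotopic.Quotient kleinBase kleinBase)
      (⟦Pc.map continuous_qmap⟧ : Path.Homotopic.Quotient (qmap (0,0)) (qmap (0,0))) := by
    apply Path.Homotopic.hpath_hext
    intro t
    exact (hPl t).symm
  have h2 : (⟦Pc.map continuous_qmap⟧ : Path.Homotopic.Quotient (qmap (0,0)) (qmap (0,0)))
      = ⟦(Path.refl ((0:ℝ),(0:ℝ))).map continuous_qmap⟧ := Quotient.sound hmap
  have h3 : HEq (⟦(Path.refl ((0:ℝ),(0:ℝ))).map continuous_qmap⟧ :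
        Path.Homotopic.Quotient (qmap (0,0)) (qmap (0,0)))
      (⟦Path.refl kleinBase⟧ : Path.Homotopic.Quotient kleinBase kleinBase) := by
    apply Path.Homotopic.hpath_hext
    intro t
    exact qmap_zero
  have : (⟦γ⟧ : Path.Homotopic.Quotient kleinBase kleinBase) = ⟦Path.refl kleinBase⟧ :=
    eq_of_heq ((h1.trans (heq_of_eq h2)).trans h3)
  apply toQ_injective
  rw [← hγ, this, toQ_one]

lemma mon_surjective : Function.Surjective mon := by
  intro g
  have hcont : Continuous fun t : I => ((t:ℝ)) • (act g ((0:ℝ),(0:ℝ))) :=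
    (continuous_subtype_val.smul continuous_const)
  set Pg : Path ((0:ℝ),(0:ℝ)) (act g ((0:ℝ),(0:ℝ))) :=
    ⟨⟨fun t => ((t:ℝ)) • (act g ((0:ℝ),(0:ℝ))), hcont⟩, by simp; rfl, by simp⟩ with hPg
  set γg : Path kleinBase kleinBase :=
    ⟨⟨fun t => qmap (Pg t), continuous_qmap.comp Pg.continuous⟩, by
        show qmap (Pg 0) = kleinBase
        rw [Pg.source]
        exact qmap_zero, by
        show qmap (Pg 1) = kleinBase
        rw [Pg.target, qmap_act]
        exact qmap_zero⟩ with hγg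
  refine ⟨ofQ ⟦γg⟧, mon_eq ⟨γg, Pg, ?_, fun t => rfl⟩⟩
  exact (toQ_ofQ _).symm

lemma mon_inv (a : FundamentalGroup KleinBottle kleinBase) : mon a⁻¹ = (mon a)⁻¹ := by
  have h := mon_mul a a⁻¹
  rw [mul_inv_cancel, mon_one] at h
  exact eq_inv_of_mul_eq_one_left h.symm

lemma mon_injective : Function.Injective mon := by
  intro a b h
  have : mon (a * b⁻¹) = 1 := by
    rw [mon_mul, mon_inv, h, inv_mul_cancel]
  have := mon_eq_one_imp this
  rwa [mul_inv_eq_one] at this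

/-- The monodromy group homomorphism. -/
def monHom : FundamentalGroup KleinBottle kleinBase →* KC where
  toFun a := (mon a)⁻¹
  map_one' := by
    show (mon 1)⁻¹ = 1
    rw [mon_one, inv_one]
  map_mul' a b := by
    show (mon (a * b))⁻¹ = (mon a)⁻¹ * (mon b)⁻¹
    rw [mon_mul]
    exact mul_inv_rev _ _

lemma monHom_bijective : Function.Bijective monHom := by
  constructor
  · intro a b h
    have h2 : (mon a)⁻¹ = (mon b)⁻¹ := h
    exact mon_injective (inv_injective h2)
  · intro g
    obtain ⟨a, ha⟩ := mon_surjective g⁻¹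
    exact ⟨a, by simp [monHom, ha]⟩

end KBproof

/-- The fundamental group of the Klein bottle is isomorphic to the presented group
`⟨μ, λ | μλμλ⁻¹⟩`. -/
theorem fundamentalGroup_kleinBottle_iso_presented :
    Nonempty (FundamentalGroup KleinBottle kleinBase ≃* KleinGroup) := by
  exact ⟨(MulEquiv.ofBijective KBproof.monHom KBproof.monHom_bijective).trans
    KBproof.presEquivKC.symm⟩
end
end

section
/- Let G be the presented group on two generators μ and λ subject to the single relation μλμ = λ. Then every element of G can be written in the form λᵏ μˡ for some integers k and l. -/
/-- The image of the generator `μ` in `G`. -/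
def muG : KleinGroup := PresentedGroup.of KleinGen.mu

/-- The image of the generator `λ` in `G`. -/
def lamG : KleinGroup := PresentedGroup.of KleinGen.lam

lemma klein_rel : muG * lamG * muG * lamG⁻¹ = 1 := by
  have h : (FreeGroup.of KleinGen.mu * FreeGroup.of KleinGen.lam * FreeGroup.of KleinGen.mu *
      (FreeGroup.of KleinGen.lam)⁻¹) ∈ Subgroup.normalClosure kleinRels :=
    Subgroup.subset_normalClosure rfl
  have := (QuotientGroup.eq_one_iff _).2 h
  exact this

lemma conj_mu : lamG⁻¹ * muG * lamG = muG⁻¹ := by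
  have h0 : muG * lamG * muG = lamG := by
    have := klein_rel
    rw [mul_inv_eq_one] at this
    exact this
  have h : muG * lamG = lamG * muG⁻¹ := by nth_rewrite 2 [← h0]; group
  rw [mul_assoc, h]; group

lemma conj_mu_zpow (l : ℤ) : lamG⁻¹ * muG ^ l * lamG = muG ^ (-l) := by
  have h := @conj_zpow _ _ l lamG⁻¹ muG
  rw [inv_inv] at h
  rw [← h, conj_mu, inv_zpow, zpow_neg]

lemma mu_comm : ∀ k l : ℤ, ∃ l' : ℤ, muG ^ l * lamG ^ k = lamG ^ k * muG ^ l' := by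
  have step : ∀ l : ℤ, muG ^ l * lamG = lamG * muG ^ (-l) := fun l => by
    rw [← conj_mu_zpow]; group
  intro k
  induction k using Int.induction_on with
  | zero => exact fun l => ⟨l, by simp⟩
  | succ n ih =>
    intro l
    obtain ⟨l', h⟩ := ih l
    refine ⟨-l', ?_⟩
    rw [show ((n : ℤ) + 1) = (n : ℤ) + 1 from rfl, zpow_add_one, ← mul_assoc, h,
      mul_assoc, step, ← mul_assoc, ← zpow_add_one]
  | pred n ih =>
    intro l
    obtain ⟨l', h⟩ := ih l
    refine ⟨-l', ?_⟩
    have step' : muG ^ l' * lamG⁻¹ = lamG⁻¹ * muG ^ (-l') := by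
      have := step (-l')
      rw [eq_comm, ← mul_inv_eq_iff_eq_mul] at this
      rw [← this]; group
    rw [zpow_sub_one, ← mul_assoc, h, mul_assoc, step', ← mul_assoc, ← zpow_sub_one]

/-- In `G = ⟨μ, λ | μλμ = λ⟩`, every element can be written as `λᵏ μˡ` with `k, l ∈ ℤ`. -/
theorem kleinGroup_normal_form (g : KleinGroup) :
    ∃ k l : ℤ, g = lamG ^ k * muG ^ l := by
  induction g using PresentedGroup.induction_on with
  | H z =>
    induction z using FreeGroup.induction_on with
    | C1 => exact ⟨0, 0, by simp⟩
    | of x =>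
      cases x with
      | mu => exact ⟨0, 1, by simp [muG, PresentedGroup.of, FreeGroup.of]⟩
      | lam => exact ⟨1, 0, by simp [lamG, PresentedGroup.of, FreeGroup.of]⟩
    | inv_of x _ =>
      cases x with
      | mu => exact ⟨0, -1, by simp [muG, PresentedGroup.of, FreeGroup.of]; rfl⟩
      | lam => exact ⟨-1, 0, by simp [lamG, PresentedGroup.of, FreeGroup.of]; rfl⟩
    | mul x y ihx ihy =>
      obtain ⟨k, l, hx⟩ := ihx
      obtain ⟨k', l', hy⟩ := ihy
      obtain ⟨l'', hc⟩ := mu_comm k' l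
      refine ⟨k + k', l'' + l', ?_⟩
      rw [map_mul, hx, hy, mul_assoc, ← mul_assoc (muG ^ l), hc, zpow_add, zpow_add]
      group
end

section
/- Let G be the presented group on two generators μ and λ subject to the single relation μλμ = λ. Then G is isomorphic to the semidirect product ℤ ⋊ ℤ, where the second factor acts on the first by n · m = (-1)ⁿ m (i.e., the generator of the acting copy of ℤ acts by negation), via an isomorphism sending μ to the element (1, 0) and λ to the element (0, 1). -/
/-- The negation automorphism `m ↦ -m` of `ℤ` (written multiplicatively: inversion). -/
def negAut : MulAut (Multiplicative ℤ) := MulEquiv.inv (Multiplicative ℤ)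

/-- The action of `ℤ` on `ℤ` in which the generator `1` acts by negation. -/
def actByNeg : Multiplicative ℤ →* MulAut (Multiplicative ℤ) :=
  zpowersHom (MulAut (Multiplicative ℤ)) negAut

open SemidirectProduct Multiplicative

abbrev Ssd := Multiplicative ℤ ⋊[actByNeg] Multiplicative ℤ

def kleinFun : KleinGen → Ssd
  | KleinGen.mu => inl (ofAdd 1)
  | KleinGen.lam => inr (ofAdd 1)

lemma klein_rels_hold : ∀ r ∈ kleinRels, FreeGroup.lift kleinFun r = 1 := by
  intro r hr
  simp only [kleinRels, Set.mem_singleton_iff] at hr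
  subst hr
  simp only [map_mul, map_inv, FreeGroup.lift_apply_of, kleinFun]
  ext
  · simp only [SemidirectProduct.mul_left, SemidirectProduct.mul_right, SemidirectProduct.inv_left, SemidirectProduct.inv_right, SemidirectProduct.left_inl, SemidirectProduct.right_inl, SemidirectProduct.left_inr, SemidirectProduct.right_inr]
    simp [actByNeg, negAut]
  · simp

def toS : KleinGroup →* Ssd := PresentedGroup.toGroup klein_rels_hold

lemma hrel : lamG * muG * lamG⁻¹ = muG⁻¹ := by
  have h1 : (muG * lamG * muG * lamG⁻¹ : KleinGroup) = 1 := by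
    have : (FreeGroup.of KleinGen.mu * FreeGroup.of KleinGen.lam * FreeGroup.of KleinGen.mu *
        (FreeGroup.of KleinGen.lam)⁻¹) ∈ Subgroup.normalClosure kleinRels :=
      Subgroup.subset_normalClosure rfl
    simpa [muG, lamG, PresentedGroup.of, map_mul, map_inv] using
      PresentedGroup.mk_eq_one_iff.2 this
  have h2 : muG * (lamG * muG * lamG⁻¹) = 1 := by rw [← h1]; group
  have h3 : lamG * muG * lamG⁻¹ = muG⁻¹ * (muG * (lamG * muG * lamG⁻¹)) := by group
  rw [h3, h2, mul_one]

lemma hconj (m : ℤ) : lamG * muG ^ m * lamG⁻¹ = (muG ^ m)⁻¹ := by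
  calc lamG * muG ^ m * lamG⁻¹ = (lamG * muG * lamG⁻¹) ^ m := by rw [conj_zpow]
  _ = (muG⁻¹) ^ m := by rw [hrel]
  _ = (muG ^ m)⁻¹ := by group

lemma hconj' (m : ℤ) : lamG⁻¹ * muG ^ m * lamG = (muG ^ m)⁻¹ := by
  have h3 : lamG * muG ^ (-m) * lamG⁻¹ = muG ^ m := by rw [hconj]; group
  calc lamG⁻¹ * muG ^ m * lamG = lamG⁻¹ * (lamG * muG ^ (-m) * lamG⁻¹) * lamG := by rw [h3]
  _ = muG ^ (-m) := by group
  _ = (muG ^ m)⁻¹ := by group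

lemma key' (n : ℤ) (a : Multiplicative ℤ) :
    muG ^ (toAdd (actByNeg (ofAdd n) a)) = lamG ^ n * muG ^ toAdd a * (lamG ^ n)⁻¹ := by
  induction n using Int.induction_on with
  | zero => simp [actByNeg]
  | succ k ih =>
      have hact : actByNeg (ofAdd ((k : ℤ) + 1)) a = (actByNeg (ofAdd (k : ℤ)) a)⁻¹ := by
        show (negAut ^ ((k : ℤ) + 1)) a = _
        rw [zpow_add, zpow_one]
        show (negAut ^ (k : ℤ)) (negAut a) = _
        rw [show negAut a = a⁻¹ from rfl]
        exact map_inv _ a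
      rw [show toAdd (actByNeg (ofAdd ((k:ℤ)+1)) a) = -(toAdd (actByNeg (ofAdd (k:ℤ)) a)) by
        rw [hact]; simp]
      rw [show muG ^ (-(toAdd (actByNeg (ofAdd (k:ℤ)) a))) =
        (muG ^ (toAdd (actByNeg (ofAdd (k:ℤ)) a)))⁻¹ by group, ← hconj, ih, zpow_add, zpow_one]
      group
  | pred k ih =>
      have hact : actByNeg (ofAdd (-(k : ℤ) - 1)) a = (actByNeg (ofAdd (-(k : ℤ))) a)⁻¹ := by
        show (negAut ^ (-(k : ℤ) - 1)) a = _
        rw [sub_eq_add_neg, zpow_add, zpow_neg_one]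
        show (negAut ^ (-(k : ℤ))) (negAut⁻¹ a) = _
        rw [show negAut⁻¹ a = a⁻¹ from rfl]
        exact map_inv _ a
      rw [show toAdd (actByNeg (ofAdd (-(k:ℤ)-1)) a) = -(toAdd (actByNeg (ofAdd (-(k:ℤ))) a)) by
        rw [hact]; simp]
      rw [show muG ^ (-(toAdd (actByNeg (ofAdd (-(k:ℤ))) a))) =
        (muG ^ (toAdd (actByNeg (ofAdd (-(k:ℤ))) a)))⁻¹ by group, ← hconj', ih,
        show (-(k:ℤ) - 1) = -(k:ℤ) + -1 by ring, zpow_add]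
      group

lemma key (n a : Multiplicative ℤ) :
    muG ^ (toAdd (actByNeg n a)) = lamG ^ toAdd n * muG ^ toAdd a * (lamG ^ toAdd n)⁻¹ :=
  key' (toAdd n) a

def toG : Ssd →* KleinGroup :=
  SemidirectProduct.lift (zpowersHom _ muG) (zpowersHom _ lamG) (by
    intro g
    apply MonoidHom.ext_mint
    simp only [MonoidHom.comp_apply, MulEquiv.coe_toMonoidHom, MulAut.conj_apply,
      zpowersHom_apply]
    exact key g (ofAdd 1))

lemma toS_mu : toS muG = inl (ofAdd 1) := PresentedGroup.toGroup.of klein_rels_hold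
lemma toS_lam : toS lamG = inr (ofAdd 1) := PresentedGroup.toGroup.of klein_rels_hold


/-- `G = ⟨μ, λ | μλμ = λ⟩` is isomorphic to the semidirect product `ℤ ⋊ ℤ`, where the
second factor acts on the first by `n · m = (-1)ⁿ m`, via an isomorphism sending `μ` to
`(1,0)` and `λ` to `(0,1)`. -/
theorem kleinGroup_iso_semidirectProduct :
    (∀ m : Multiplicative ℤ, actByNeg (Multiplicative.ofAdd 1) m = m⁻¹) ∧
    ∃ e : KleinGroup ≃* (Multiplicative ℤ ⋊[actByNeg] Multiplicative ℤ),
      e muG = SemidirectProduct.inl (Multiplicative.ofAdd 1) ∧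
      e lamG = SemidirectProduct.inr (Multiplicative.ofAdd 1) := by
  constructor
  · intro m; simp [actByNeg, negAut]
  · have h1 : toG.comp toS = MonoidHom.id _ := by
      apply PresentedGroup.ext
      intro x
      cases x
      · show toG (toS muG) = muG
        rw [toS_mu]
        simp [toG]
      · show toG (toS lamG) = lamG
        rw [toS_lam]
        simp [toG]
    have h2 : toS.comp toG = MonoidHom.id _ := by
      apply SemidirectProduct.hom_ext
      · apply MonoidHom.ext_mint
        simp [toG, toS_mu]
      · apply MonoidHom.ext_mint
        simp [toG, toS_lam]
    exact ⟨MonoidHom.toMulEquiv toS toG h1 h2, toS_mu, toS_lam⟩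
end

section
/- Let G be the presented group on two generators μ and λ subject to the single relation μλμ = λ. Then the center of G is exactly the cyclic subgroup generated by λ², i.e., Z(G) = { λ^{2n} : n ∈ ℤ }. -/
namespace KleinProof

open Multiplicative SemidirectProduct

/-- The basic relation `μλμλ⁻¹ = 1`. -/
theorem rel1 : muG * lamG * muG * lamG⁻¹ = 1 := by
  have h : PresentedGroup.mk kleinRels
      (FreeGroup.of KleinGen.mu * FreeGroup.of KleinGen.lam * FreeGroup.of KleinGen.mu *
        (FreeGroup.of KleinGen.lam)⁻¹) = 1 :=
    (QuotientGroup.eq_one_iff _).mpr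
      (Subgroup.subset_normalClosure (s := kleinRels) rfl)
  simpa [muG, lamG, PresentedGroup.of, map_mul, map_inv] using h

theorem rel : muG * lamG * muG = lamG := by
  have h := rel1
  rwa [mul_inv_eq_one] at h

theorem mu_lam : muG * lamG = lamG * muG⁻¹ := by
  have h := rel
  calc muG * lamG = muG * lamG * muG * muG⁻¹ := by group
    _ = lamG * muG⁻¹ := by rw [h]

theorem lam_mu : lamG * muG = muG⁻¹ * lamG := by
  have h := rel
  calc lamG * muG = muG⁻¹ * (muG * lamG * muG) := by group
    _ = muG⁻¹ * lamG := by rw [h]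

theorem lam_sq_comm_mu : lamG ^ 2 * muG = muG * lamG ^ 2 := by
  calc lamG ^ 2 * muG = lamG * (lamG * muG) := by rw [sq, mul_assoc]
    _ = lamG * (muG⁻¹ * lamG) := by rw [lam_mu]
    _ = (lamG * muG⁻¹) * lamG := by group
    _ = (muG * lamG) * lamG := by rw [← mu_lam]
    _ = muG * lamG ^ 2 := by rw [sq, mul_assoc]

theorem commute_lam_sq_mu : Commute (lamG ^ 2) muG := lam_sq_comm_mu

theorem conj_lam_mu : lamG * muG * lamG⁻¹ = muG⁻¹ := by
  rw [lam_mu]; group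

theorem conj_lam_mu_zpow (m : ℤ) : lamG * muG ^ m * lamG⁻¹ = muG ^ (-m) := by
  have h : (MulAut.conj lamG) (muG ^ m) = ((MulAut.conj lamG) muG) ^ m := map_zpow _ _ _
  simp only [MulAut.conj_apply] at h
  rw [h, conj_lam_mu, inv_zpow, ← zpow_neg]

theorem lam_zpow_even_comm (k : ℤ) (hk : Even k) (m : ℤ) :
    lamG ^ k * muG ^ m = muG ^ m * lamG ^ k := by
  obtain ⟨j, rfl⟩ := hk
  have h : lamG ^ (j + j) = (lamG ^ (2 : ℕ)) ^ j := by
    rw [← zpow_natCast lamG 2, ← zpow_mul]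
    congr 1
    push_cast
    ring
  rw [h]
  exact ((commute_lam_sq_mu.zpow_left j).zpow_right m).eq

/-- The inversion automorphism of `Multiplicative ℤ`. -/
def ι : MulAut (Multiplicative ℤ) := MulEquiv.inv (Multiplicative ℤ)

theorem ι_apply (x : Multiplicative ℤ) : ι x = x⁻¹ := rfl

theorem ι_sq : ι ^ 2 = 1 := by
  ext x
  simp only [pow_two, MulAut.mul_apply, ι_apply, inv_inv, MulAut.one_apply]

theorem ι_zpow_even {k : ℤ} (hk : Even k) : ι ^ k = 1 := by
  obtain ⟨j, rfl⟩ := hk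
  have h : j + j = ((2 : ℕ) : ℤ) * j := by push_cast; ring
  rw [h, zpow_mul, zpow_natCast, ι_sq, one_zpow]

theorem ι_zpow_odd {k : ℤ} (hk : ¬ Even k) : ι ^ k = ι := by
  rw [Int.not_even_iff_odd] at hk
  obtain ⟨j, rfl⟩ := hk
  have h : 2 * j = ((2 : ℕ) : ℤ) * j := by push_cast; ring
  rw [zpow_add, zpow_one, h, zpow_mul, zpow_natCast, ι_sq, one_zpow, one_mul]

/-- The action of `Multiplicative ℤ` on `Multiplicative ℤ` by inversion. -/
def φ : Multiplicative ℤ →* MulAut (Multiplicative ℤ) := zpowersHom _ ι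

/-- The concrete model `ℤ ⋊ ℤ` of the Klein bottle group. -/
abbrev K := Multiplicative ℤ ⋊[φ] Multiplicative ℤ

theorem φ_apply (b : Multiplicative ℤ) : φ b = ι ^ (Multiplicative.toAdd b) := rfl

theorem φ_even {b : Multiplicative ℤ} (hb : Even (Multiplicative.toAdd b)) : φ b = 1 := by
  rw [φ_apply, ι_zpow_even hb]

theorem φ_odd {b : Multiplicative ℤ} (hb : ¬ Even (Multiplicative.toAdd b)) : φ b = ι := by
  rw [φ_apply, ι_zpow_odd hb]

def fgen : KleinGen → K
  | .mu => inl (ofAdd 1)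
  | .lam => inr (ofAdd 1)

theorem frel : ∀ r ∈ kleinRels, FreeGroup.lift fgen r = 1 := by
  intro r hr
  rw [kleinRels, Set.mem_singleton_iff] at hr
  subst hr
  simp only [map_mul, map_inv, FreeGroup.lift_apply_of]
  show inl (ofAdd (1:ℤ)) * inr (ofAdd (1:ℤ)) * inl (ofAdd (1:ℤ)) * (inr (ofAdd (1:ℤ)))⁻¹ = 1
  have h : (inl (φ (ofAdd (1:ℤ)) (ofAdd (1:ℤ))) : K) =
      inr (ofAdd (1:ℤ)) * inl (ofAdd (1:ℤ)) * (inr (ofAdd (1:ℤ)))⁻¹ := inl_aut _ _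
  rw [mul_assoc, mul_assoc, ← mul_assoc (inr (ofAdd (1:ℤ))), ← h, φ_odd (by simp), ι_apply,
    ← map_mul, mul_inv_cancel, map_one]

/-- The homomorphism from the Klein bottle group to the concrete model. -/
def f : KleinGroup →* K := PresentedGroup.toGroup frel

@[simp] theorem f_mu : f muG = inl (ofAdd 1) := PresentedGroup.toGroup.of frel
@[simp] theorem f_lam : f lamG = inr (ofAdd 1) := PresentedGroup.toGroup.of frel

theorem g_compat : ∀ b : Multiplicative ℤ,
    (zpowersHom KleinGroup muG).comp (φ b).toMonoidHom =
      (MulAut.conj ((zpowersHom KleinGroup lamG) b)).toMonoidHom.comp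
        (zpowersHom KleinGroup muG) := by
  intro b
  refine MonoidHom.ext fun a => ?_
  simp only [MonoidHom.comp_apply, MulEquiv.coe_toMonoidHom, MulAut.conj_apply, zpowersHom_apply]
  by_cases hb : Even (Multiplicative.toAdd b)
  · rw [φ_even hb, MulAut.one_apply, lam_zpow_even_comm _ hb]
    group
  · rw [φ_odd hb, ι_apply, toAdd_inv]
    rw [Int.not_even_iff_odd] at hb
    obtain ⟨j, hj⟩ := hb
    have heven : Even (2 * j) := ⟨j, by ring⟩
    have hsplit : lamG ^ (Multiplicative.toAdd b) = lamG ^ (2 * j) * lamG := by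
      rw [hj, zpow_add, zpow_one]
    have key : lamG ^ (Multiplicative.toAdd b) * muG ^ (Multiplicative.toAdd a) *
        (lamG ^ (Multiplicative.toAdd b))⁻¹ = muG ^ (-(Multiplicative.toAdd a)) := by
      rw [hsplit, mul_inv_rev]
      calc lamG ^ (2 * j) * lamG * muG ^ (Multiplicative.toAdd a) *
            (lamG⁻¹ * (lamG ^ (2 * j))⁻¹)
          = lamG ^ (2 * j) * (lamG * muG ^ (Multiplicative.toAdd a) * lamG⁻¹) *
            (lamG ^ (2 * j))⁻¹ := by group
        _ = lamG ^ (2 * j) * muG ^ (-(Multiplicative.toAdd a)) * (lamG ^ (2 * j))⁻¹ := by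
            rw [conj_lam_mu_zpow]
        _ = muG ^ (-(Multiplicative.toAdd a)) * lamG ^ (2 * j) * (lamG ^ (2 * j))⁻¹ := by
            rw [lam_zpow_even_comm (2 * j) heven]
        _ = muG ^ (-(Multiplicative.toAdd a)) := by group
    rw [key]

/-- The homomorphism from the concrete model back to the Klein bottle group. -/
def g : K →* KleinGroup :=
  SemidirectProduct.lift (zpowersHom _ muG) (zpowersHom _ lamG) g_compat

theorem g_comp_f : g.comp f = MonoidHom.id KleinGroup := by
  apply PresentedGroup.ext
  intro x
  cases x with
  | mu =>
    show g (f muG) = muG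
    rw [f_mu]
    simp [g, zpowersHom_apply]
  | lam =>
    show g (f lamG) = lamG
    rw [f_lam]
    simp [g, zpowersHom_apply]

theorem g_f (x : KleinGroup) : g (f x) = x := by
  have h := congrArg (fun h => h x) g_comp_f
  simpa using h

theorem f_injective : Function.Injective f := by
  intro a b hab
  have h := congrArg g hab
  rwa [g_f, g_f] at h

theorem lam_sq_mem_center : lamG ^ 2 ∈ Subgroup.center KleinGroup := by
  rw [Subgroup.mem_center_iff]
  intro x
  have hx : x ∈ Subgroup.centralizer {lamG ^ 2} := by
    apply PresentedGroup.generated_by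
    intro j
    rw [Subgroup.mem_centralizer_iff]
    intro s hs
    rw [Set.mem_singleton_iff] at hs
    subst hs
    cases j with
    | mu => exact lam_sq_comm_mu
    | lam => show lamG ^ 2 * lamG = lamG * lamG ^ 2; group
  rw [Subgroup.mem_centralizer_iff] at hx
  exact (hx (lamG ^ 2) rfl).symm

theorem center_le : Subgroup.center KleinGroup ≤ Subgroup.zpowers (lamG ^ 2) := by
  intro z hz
  have hcomm := Subgroup.mem_center_iff.mp hz
  have h1 : f z * inl (ofAdd 1) = inl (ofAdd 1) * f z := by
    have h := congrArg f (hcomm muG)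
    rw [map_mul, map_mul, f_mu] at h
    exact h.symm
  have h2 : f z * inr (ofAdd 1) = inr (ofAdd 1) * f z := by
    have h := congrArg f (hcomm lamG)
    rw [map_mul, map_mul, f_lam] at h
    exact h.symm
  -- the `right` component of `f z` is even
  have hb : Even (Multiplicative.toAdd (f z).right) := by
    by_contra hodd
    have h := congrArg SemidirectProduct.left h1
    simp only [mul_left, mul_right, right_inl, left_inl, map_one, MulAut.one_apply] at h
    rw [φ_odd hodd, ι_apply] at h
    have h' := congrArg Multiplicative.toAdd h
    simp only [toAdd_mul, toAdd_inv, toAdd_ofAdd] at h'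
    omega
  -- the `left` component of `f z` is trivial
  have ha : (f z).left = 1 := by
    have h := congrArg SemidirectProduct.left h2
    simp only [mul_left, mul_right, right_inr, left_inr, map_one, MulAut.one_apply] at h
    rw [φ_odd (by simp), ι_apply] at h
    have h' := congrArg Multiplicative.toAdd h
    simp only [toAdd_mul, toAdd_inv, toAdd_one] at h'
    have : Multiplicative.toAdd (f z).left = 0 := by omega
    simpa using congrArg Multiplicative.ofAdd this
  obtain ⟨j, hj⟩ := hb
  refine Subgroup.mem_zpowers_iff.mpr ⟨j, ?_⟩
  apply f_injective
  have hfz : f z = inr ((f z).right) := by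
    ext
    · rw [ha]; rfl
    · rfl
  have hval : ((ofAdd (1 : ℤ)) ^ (2 : ℕ)) ^ j = (f z).right := by
    apply Multiplicative.toAdd.injective
    rw [toAdd_zpow, toAdd_pow, toAdd_ofAdd, hj]
    simp only [smul_eq_mul]
    ring
  rw [map_zpow, map_pow, f_lam, ← map_pow, ← map_zpow, hval, ← hfz]

end KleinProof

/-- The center of the Klein bottle group `G = ⟨μ, λ | μλμ = λ⟩` is exactly the cyclic
subgroup generated by `λ²`. -/
theorem kleinGroup_center :
    Subgroup.center KleinGroup = Subgroup.zpowers (lamG ^ 2) := by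
  apply le_antisymm KleinProof.center_le
  rw [Subgroup.zpowers_le]
  exact KleinProof.lam_sq_mem_center
end

section
/- Let G be the presented group on two generators μ and λ subject to the single relation μλμ = λ, and let H be the presented group on two generators a and b subject to the single relation a² = b². Then there is a group isomorphism from H to G sending a to λ and b to μλ. -/
/-- The two generators `a` and `b` of the second presentation. -/
inductive TGen : Type
  | a : TGen
  | b : TGen

/-- The single relator `a²b⁻²`. -/
def tRels : Set (FreeGroup TGen) :=
  {FreeGroup.of TGen.a ^ 2 * (FreeGroup.of TGen.b ^ 2)⁻¹}

/-- The presented group `H = ⟨a, b | a² = b²⟩`. -/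
abbrev TGroup : Type := PresentedGroup tRels

/-- Image of a generator of `H` in `G`. -/
def fGen : TGen → KleinGroup
  | TGen.a => lamG
  | TGen.b => muG * lamG

/-- Image of a generator of `G` in `H`. -/
def gGen : KleinGen → TGroup
  | KleinGen.mu => PresentedGroup.of TGen.b * (PresentedGroup.of TGen.a)⁻¹
  | KleinGen.lam => PresentedGroup.of TGen.a

lemma t_rel : (PresentedGroup.of TGen.a : TGroup) ^ 2 *
    ((PresentedGroup.of TGen.b : TGroup) ^ 2)⁻¹ = 1 := by
  have : (QuotientGroup.mk (FreeGroup.of TGen.a ^ 2 * (FreeGroup.of TGen.b ^ 2)⁻¹) :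
      TGroup) = 1 := by
    apply (QuotientGroup.eq_one_iff _).mpr
    exact Subgroup.subset_normalClosure rfl
  simp only [PresentedGroup.of, ← map_pow, ← map_mul, ← map_inv]; exact this

lemma f_rels : ∀ r ∈ tRels, FreeGroup.lift fGen r = 1 := by
  intro r hr
  rw [tRels, Set.mem_singleton_iff] at hr
  subst hr
  simp only [map_mul, map_inv, map_pow, FreeGroup.lift_apply_of, fGen]
  have h3 : muG * lamG * muG = lamG := by
    calc muG * lamG * muG = muG * lamG * muG * lamG⁻¹ * lamG := by group
      _ = lamG := by rw [klein_rel]; group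
  calc lamG ^ 2 * ((muG * lamG) ^ 2)⁻¹
      = lamG * (muG * lamG * muG)⁻¹ * lamG⁻¹ * lamG := by rw [sq, sq]; group
    _ = 1 := by rw [h3]; group

lemma g_rels : ∀ r ∈ kleinRels, FreeGroup.lift gGen r = 1 := by
  intro r hr
  rw [kleinRels, Set.mem_singleton_iff] at hr
  subst hr
  simp only [map_mul, map_inv, FreeGroup.lift_apply_of, gGen]
  set A := (PresentedGroup.of TGen.a : TGroup)
  set B := (PresentedGroup.of TGen.b : TGroup)
  have h : A ^ 2 = B ^ 2 := by
    have := t_rel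
    calc A ^ 2 = A ^ 2 * (B ^ 2)⁻¹ * B ^ 2 := by group
      _ = B ^ 2 := by rw [this]; group
  calc B * A⁻¹ * A * (B * A⁻¹) * A⁻¹ = B * B * (A ^ 2)⁻¹ := by group
    _ = B * B * (B ^ 2)⁻¹ := by rw [h]
    _ = 1 := by group

/-- There is an isomorphism `H = ⟨a, b | a² = b²⟩ ≅ G = ⟨μ, λ | μλμ = λ⟩` sending `a` to
`λ` and `b` to `μλ`. -/
theorem kleinGroup_second_presentation :
    ∃ e : TGroup ≃* KleinGroup,
      e (PresentedGroup.of TGen.a) = lamG ∧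
      e (PresentedGroup.of TGen.b) = muG * lamG := by
  let f : TGroup →* KleinGroup := PresentedGroup.toGroup f_rels
  let g : KleinGroup →* TGroup := PresentedGroup.toGroup g_rels
  have hgf : g.comp f = MonoidHom.id TGroup := by
    apply PresentedGroup.ext
    intro x
    cases x <;>
      simp [f, g, PresentedGroup.toGroup.of, fGen, gGen, lamG, muG]
  have hfg : f.comp g = MonoidHom.id KleinGroup := by
    apply PresentedGroup.ext
    intro x
    cases x <;>
      simp [f, g, PresentedGroup.toGroup.of, fGen, gGen, lamG, muG]
  refine ⟨MonoidHom.toMulEquiv f g hgf hfg, ?_, ?_⟩ <;>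
    · rw [show ((MonoidHom.toMulEquiv f g hgf hfg : TGroup ≃* KleinGroup) :
        TGroup → KleinGroup) = f from rfl]
      exact PresentedGroup.toGroup.of f_rels
end

section
/- Let G be the presented group on two generators μ and λ subject to the single relation μλμ = λ. The map ι : ℤ × ℤ → G defined by ι(a, b) = μᵃ λ^{2b} is a group homomorphism, and ι is injective. -/
/-- The map `ι : ℤ × ℤ → G`, `ι(a,b) = μᵃ λ^{2b}`. -/
def iotaMap : ℤ × ℤ → KleinGroup := fun p => muG ^ p.1 * lamG ^ (2 * p.2)

/- Auxiliary: a concrete faithful-ish action on ℤ × ℤ. -/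

/-- `μ` acts by `(x,y) ↦ (x+1, y)`. -/
def muE : Equiv.Perm (ℤ × ℤ) where
  toFun p := (p.1 + 1, p.2)
  invFun p := (p.1 - 1, p.2)
  left_inv p := by simp
  right_inv p := by simp

/-- `λ` acts by `(x,y) ↦ (-x, y+1)`. -/
def lamE : Equiv.Perm (ℤ × ℤ) where
  toFun p := (-p.1, p.2 + 1)
  invFun p := (-p.1, p.2 - 1)
  left_inv p := by simp
  right_inv p := by simp

lemma muE_zpow (n : ℤ) : ∀ p : ℤ × ℤ, (muE ^ n) p = (p.1 + n, p.2) := by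
  induction n using Int.induction_on with
  | zero => simp
  | succ k ih =>
      intro p
      rw [zpow_add_one, Equiv.Perm.mul_apply, ih]
      simp [muE]; ring
  | pred k ih =>
      intro p
      rw [zpow_sub_one, Equiv.Perm.mul_apply]
      have hinv : (muE⁻¹) p = (p.1 - 1, p.2) := rfl
      rw [hinv, ih]
      simp; ring

lemma lamE_sq (p : ℤ × ℤ) : (lamE ^ (2 : ℤ)) p = (p.1, p.2 + 2) := by
  have : lamE ^ (2 : ℤ) = lamE * lamE := by
    rw [show (2 : ℤ) = ((2 : ℕ) : ℤ) from rfl, zpow_natCast, pow_two]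
  rw [this, Equiv.Perm.mul_apply]
  simp [lamE]; ring

lemma lamE_sq_zpow (n : ℤ) : ∀ p : ℤ × ℤ,
    ((lamE ^ (2 : ℤ)) ^ n) p = (p.1, p.2 + 2 * n) := by
  induction n using Int.induction_on with
  | zero => simp
  | succ k ih =>
      intro p
      rw [zpow_add_one, Equiv.Perm.mul_apply, lamE_sq, ih]
      simp; ring
  | pred k ih =>
      intro p
      rw [zpow_sub_one, Equiv.Perm.mul_apply]
      have h1 : ((lamE ^ (2 : ℤ))⁻¹) p = (p.1, p.2 - 2) := by
        apply (Equiv.symm_apply_eq _).mpr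
        rw [lamE_sq]; simp
      rw [h1, ih]
      simp; ring

/-- The homomorphism `G → Perm (ℤ × ℤ)` sending `μ ↦ muE`, `λ ↦ lamE`. -/
def toPerm : KleinGroup →* Equiv.Perm (ℤ × ℤ) :=
  PresentedGroup.toGroup (f := fun g => match g with | .mu => muE | .lam => lamE)
    (by
      intro r hr
      rw [kleinRels, Set.mem_singleton_iff] at hr
      subst hr
      simp only [map_mul, map_inv, FreeGroup.lift_apply_of]
      ext p
      · simp [muE, lamE, Equiv.Perm.mul_apply, Equiv.Perm.inv_def]
      · simp [muE, lamE, Equiv.Perm.mul_apply, Equiv.Perm.inv_def])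

lemma toPerm_mu : toPerm muG = muE := PresentedGroup.toGroup.of _

lemma toPerm_lam : toPerm lamG = lamE := PresentedGroup.toGroup.of _

lemma mu_comm_lam_sq : Commute muG (lamG ^ (2 : ℤ)) := by
  have h : muG * lamG * muG = lamG := mul_inv_eq_one.mp klein_rel
  have h2 : lamG ^ (2 : ℤ) = lamG * lamG := by
    rw [show (2 : ℤ) = ((2 : ℕ) : ℤ) from rfl, zpow_natCast, pow_two]
  unfold Commute SemiconjBy
  rw [h2]
  have hl : muG * lamG = lamG * muG⁻¹ := eq_mul_inv_of_mul_eq h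
  have h' : muG * (lamG * muG) = lamG := by rw [← mul_assoc]; exact h
  have hr : lamG * muG = muG⁻¹ * lamG := eq_inv_mul_of_mul_eq h' 
  calc muG * (lamG * lamG) = (muG * lamG) * lamG := by group
    _ = lamG * muG⁻¹ * lamG := by rw [hl]
    _ = lamG * (muG⁻¹ * lamG) := by group
    _ = lamG * (lamG * muG) := by rw [hr]
    _ = lamG * lamG * muG := by group

/-- `ι(a,b) = μᵃ λ^{2b}` is a group homomorphism `ℤ × ℤ → G = ⟨μ, λ | μλμ = λ⟩`
(from the additive group `ℤ × ℤ` to the multiplicative group `G`), and it is injective. -/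
theorem iotaMap_hom_injective :
    (∀ p q : ℤ × ℤ, iotaMap (p + q) = iotaMap p * iotaMap q) ∧
    Function.Injective iotaMap := by
  constructor
  · rintro ⟨a, b⟩ ⟨c, d⟩
    simp only [iotaMap, Prod.mk_add_mk]
    rw [mul_add, zpow_add, zpow_add]
    rw [show (2 : ℤ) * b = 2 * b from rfl]
    rw [show lamG ^ (2 * b) = (lamG ^ (2 : ℤ)) ^ b from (zpow_mul lamG 2 b),
        show lamG ^ (2 * d) = (lamG ^ (2 : ℤ)) ^ d from (zpow_mul lamG 2 d)]
    have key : muG ^ c * (lamG ^ (2 : ℤ)) ^ b = (lamG ^ (2 : ℤ)) ^ b * muG ^ c :=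
      (mu_comm_lam_sq.zpow_zpow c b).eq
    calc muG ^ a * muG ^ c * ((lamG ^ (2:ℤ)) ^ b * (lamG ^ (2:ℤ)) ^ d)
        = muG ^ a * (muG ^ c * (lamG ^ (2:ℤ)) ^ b) * (lamG ^ (2:ℤ)) ^ d := by group
      _ = muG ^ a * ((lamG ^ (2:ℤ)) ^ b * muG ^ c) * (lamG ^ (2:ℤ)) ^ d := by rw [key]
      _ = muG ^ a * (lamG ^ (2:ℤ)) ^ b * (muG ^ c * (lamG ^ (2:ℤ)) ^ d) := by group
  · rintro ⟨a, b⟩ ⟨c, d⟩ h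
    have hval : ∀ x y : ℤ, (toPerm (iotaMap (x, y))) (0, 0) = (x, 2 * y) := by
      intro x y
      simp only [iotaMap, map_mul, map_zpow, toPerm_mu, toPerm_lam]
      rw [Equiv.Perm.mul_apply]
      rw [show lamE ^ (2 * y) = (lamE ^ (2 : ℤ)) ^ y from (zpow_mul lamE 2 y)]
      rw [lamE_sq_zpow, muE_zpow]
      simp
    have h2 : ((a, 2 * b) : ℤ × ℤ) = (c, 2 * d) := by
      rw [← hval a b, ← hval c d, h]
    have h3 := Prod.mk.injEq .. ▸ h2
    obtain ⟨h4, h5⟩ := Prod.mk_inj.mp h2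
    exact Prod.ext h4 (by omega)
end

section
/- Let ψ : ℤ × ℤ → ℤ × ℤ/2ℤ × ℤ be the group homomorphism sending (1, 0) to (0, 1, 0) and (0, 1) to (2, 0, 1). Then the cokernel (ℤ × ℤ/2ℤ × ℤ) / image(ψ) is isomorphic to ℤ. -/
/-- The map `(x, y, z) ↦ x - 2z`. -/
def cokAux : (ℤ × ZMod 2 × ℤ) →+ ℤ :=
  AddMonoidHom.mk' (fun p => p.1 - 2 * p.2.2) (by intro a b; simp; ring)

/-- Let `ψ : ℤ × ℤ → ℤ × ℤ/2ℤ × ℤ` be the group homomorphism sending `(1,0)` to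
`(0,1,0)` and `(0,1)` to `(2,0,1)`. Then the cokernel `(ℤ × ℤ/2ℤ × ℤ) / im(ψ)` is
isomorphic to `ℤ`. -/
theorem cokernel_MayerVietoris_iso_int
    (ψ : (ℤ × ℤ) →+ (ℤ × ZMod 2 × ℤ))
    (h1 : ψ (1, 0) = (0, 1, 0)) (h2 : ψ (0, 1) = (2, 0, 1)) :
    Nonempty ((ℤ × ZMod 2 × ℤ) ⧸ ψ.range ≃+ ℤ) := by
  have hψ : ∀ a b : ℤ, ψ (a, b) = (2 * b, (a : ZMod 2), b) := by
    intro a b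
    have : (a, b) = a • ((1 : ℤ), (0 : ℤ)) + b • ((0 : ℤ), (1 : ℤ)) := by
      simp [Prod.ext_iff]
    rw [this, map_add, map_zsmul, map_zsmul, h1, h2]
    simp [Prod.ext_iff, mul_comm]
  have hrange : ψ.range = cokAux.ker := by
    ext ⟨x, y, z⟩
    simp only [AddMonoidHom.mem_range, AddMonoidHom.mem_ker, cokAux, AddMonoidHom.mk'_apply]
    constructor
    · rintro ⟨⟨a, b⟩, hab⟩
      rw [hψ] at hab
      simp only [Prod.mk.injEq] at hab
      omega
    · intro h
      refine ⟨((y.val : ℤ), z), ?_⟩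
      rw [hψ]
      refine Prod.ext (by omega) (Prod.ext ?_ rfl)
      simp [ZMod.natCast_val, ZMod.cast_id]
  have hsurj : Function.Surjective cokAux := by
    intro x
    exact ⟨(x, 0, 0), by simp [cokAux]⟩
  rw [hrange]
  exact ⟨QuotientAddGroup.quotientKerEquivOfSurjective cokAux hsurj⟩
end
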